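/- arXiv:0911.3071 — 11 statements merged into one kernel-verified Lean document; each statement's English description precedes it below -/
import Mathlib

section
/- Under the assumption ‖T − T^{(m)}‖ ≤ ε a with ε ∈ (0, 1/2] and T = K*K, the operator T_{a,m} := T^{(m)} + aI satisfies ‖T_{a,m}^{-1} K*‖ ≤ 1/√a. -/
theorem stmt_3
    {H : Type*} [NormedAddCommGroup H] [InnerProductSpace ℝ H] [CompleteSpace H]
    (K : H →L[ℝ] H) (a ε : ℝ) (ha : 0 < a) (hε : ε ∈ Set.Ioc (0 : ℝ) (1 / 2))
    (Tm : H →L[ℝ] H)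
    (hTm : ‖ContinuousLinearMap.adjoint K * K - Tm‖ ≤ ε * a)
    (B : H →L[ℝ] H)
    (hB1 : B * (Tm + a • (1 : H →L[ℝ] H)) = 1)
    (hB2 : (Tm + a • (1 : H →L[ℝ] H)) * B = 1) :
    ‖B * ContinuousLinearMap.adjoint K‖ ≤ 1 / Real.sqrt a := by
  have hsa : (0:ℝ) < Real.sqrt a := Real.sqrt_pos.mpr ha
  apply ContinuousLinearMap.opNorm_le_bound _ (by positivity)
  intro x
  set y := B (ContinuousLinearMap.adjoint K x) with hy
  have hBx : (B * ContinuousLinearMap.adjoint K) x = y := rfl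
  rw [hBx]
  -- the defining equation
  have heq : Tm y + a • y = ContinuousLinearMap.adjoint K x := by
    have := congrArg (fun A : H →L[ℝ] H => A (ContinuousLinearMap.adjoint K x)) hB2
    simpa [ContinuousLinearMap.mul_apply, ContinuousLinearMap.add_apply,
      ContinuousLinearMap.smul_apply, ContinuousLinearMap.one_apply] using this
  have h1 : (inner ℝ (Tm y) y : ℝ) + a * ‖y‖ ^ 2 = inner ℝ x (K y) := by
    have := congrArg (fun z => (inner ℝ z y : ℝ)) heq
    simpa [inner_add_left, real_inner_smul_left, real_inner_self_eq_norm_sq,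
      ContinuousLinearMap.adjoint_inner_left] using this
  have h2 : ‖K y‖ ^ 2 - ε * a * ‖y‖ ^ 2 ≤ (inner ℝ (Tm y) y : ℝ) := by
    have hdiff : (inner ℝ ((ContinuousLinearMap.adjoint K * K - Tm) y) y : ℝ)
        ≤ ε * a * ‖y‖ ^ 2 := by
      calc (inner ℝ ((ContinuousLinearMap.adjoint K * K - Tm) y) y : ℝ)
          ≤ ‖(ContinuousLinearMap.adjoint K * K - Tm) y‖ * ‖y‖ := real_inner_le_norm _ _
        _ ≤ (‖ContinuousLinearMap.adjoint K * K - Tm‖ * ‖y‖) * ‖y‖ := by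
            gcongr
            exact (ContinuousLinearMap.adjoint K * K - Tm).le_opNorm y
        _ ≤ (ε * a * ‖y‖) * ‖y‖ := by gcongr
        _ = ε * a * ‖y‖ ^ 2 := by ring
    have hKK : (inner ℝ ((ContinuousLinearMap.adjoint K * K) y) y : ℝ) = ‖K y‖ ^ 2 := by
      simp [ContinuousLinearMap.mul_apply, ContinuousLinearMap.adjoint_inner_left,
        real_inner_self_eq_norm_sq]
    have hsub : (inner ℝ ((ContinuousLinearMap.adjoint K * K - Tm) y) y : ℝ)
        = ‖K y‖ ^ 2 - inner ℝ (Tm y) y := by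
      rw [ContinuousLinearMap.sub_apply, inner_sub_left, hKK]
    linarith [hdiff, hsub ▸ hdiff]
  have h3 : (inner ℝ x (K y) : ℝ) ≤ ‖x‖ * ‖K y‖ := real_inner_le_norm _ _
  -- combine
  have hεa : ε * a ≤ a / 2 := by
    have := hε.2
    nlinarith [ha.le]
  have key : a * ‖y‖ ^ 2 ≤ ‖x‖ ^ 2 := by
    nlinarith [sq_nonneg (‖K y‖ - ‖x‖ / 2), sq_nonneg (‖y‖), norm_nonneg y]
  rw [one_div, inv_mul_eq_div, le_div_iff₀ hsa]
  nlinarith [Real.sq_sqrt ha.le, Real.sqrt_nonneg a, norm_nonneg x, norm_nonneg y,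
    mul_nonneg (Real.sqrt_nonneg a) (norm_nonneg y)]
end

section
/- Under the assumption ‖T − T^{(m)}‖ ≤ ε a with ε ∈ (0, 1/2] and T = K*K, one has ‖T_{a,m}^{-1} K*K‖ ≤ 2, where T_{a,m} = T^{(m)} + aI. -/
theorem stmt_4
    {H : Type*} [NormedAddCommGroup H] [InnerProductSpace ℝ H] [CompleteSpace H]
    (K : H →L[ℝ] H) (a ε : ℝ) (ha : 0 < a) (hε : ε ∈ Set.Ioc (0 : ℝ) (1 / 2))
    (Tm : H →L[ℝ] H)
    (hTm : ‖ContinuousLinearMap.adjoint K * K - Tm‖ ≤ ε * a)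
    (B : H →L[ℝ] H)
    (hB1 : B * (Tm + a • (1 : H →L[ℝ] H)) = 1)
    (hB2 : (Tm + a • (1 : H →L[ℝ] H)) * B = 1) :
    ‖B * (ContinuousLinearMap.adjoint K * K)‖ ≤ 2 := by
  obtain ⟨hε0, hε2⟩ := hε
  set T := ContinuousLinearMap.adjoint K * K with hT
  apply ContinuousLinearMap.opNorm_le_bound _ (by norm_num)
  intro x
  set y := B (T x) with hy
  have happ : (B * T) x = y := rfl
  rw [happ]
  -- (Tm + a•1) y = T x
  have key : Tm y + a • y = T x := by
    have h := congrArg (fun f : H →L[ℝ] H => f (T x)) hB2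
    simpa [ContinuousLinearMap.mul_apply, ContinuousLinearMap.add_apply,
      ContinuousLinearMap.smul_apply, ContinuousLinearMap.one_apply, ← hy] using h
  -- T (x - y) = a • y - (T y - Tm y)
  have h1 : T (x - y) = a • y - (T y - Tm y) := by
    rw [map_sub]
    rw [← key]
    abel
  -- positivity of T
  have h2 : (0:ℝ) ≤ inner ℝ (T (x - y)) (x - y) := by
    have : (inner ℝ (T (x - y)) (x - y) : ℝ) = inner ℝ (K (x - y)) (K (x - y)) := by
      simp only [hT, ContinuousLinearMap.mul_apply]
      exact ContinuousLinearMap.adjoint_inner_left K (x - y) (K (x - y))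
    rw [this]
    exact real_inner_self_nonneg
  -- bound on the perturbation term
  have hD : ‖T y - Tm y‖ ≤ ε * a * ‖y‖ := by
    have := (T - Tm).le_opNorm y
    calc ‖T y - Tm y‖ = ‖(T - Tm) y‖ := by simp
      _ ≤ ‖T - Tm‖ * ‖y‖ := (T - Tm).le_opNorm y
      _ ≤ ε * a * ‖y‖ := by
          exact mul_le_mul_of_nonneg_right hTm (norm_nonneg y)
  have h3 : |(inner ℝ (T y - Tm y) (x - y) : ℝ)| ≤ ε * a * ‖y‖ * ‖x - y‖ := by
    calc |(inner ℝ (T y - Tm y) (x - y) : ℝ)| ≤ ‖T y - Tm y‖ * ‖x - y‖ :=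
        abs_real_inner_le_norm _ _
      _ ≤ ε * a * ‖y‖ * ‖x - y‖ :=
        mul_le_mul_of_nonneg_right hD (norm_nonneg _)
  -- from h1, h2: a * ⟪y, x-y⟫ ≥ ⟪Dy, x-y⟫
  have h4 : a * (inner ℝ y (x - y) : ℝ) ≥ (inner ℝ (T y - Tm y) (x - y) : ℝ) := by
    have := h2
    rw [h1, inner_sub_left, real_inner_smul_left] at this
    linarith
  have h5 : (inner ℝ y (x - y) : ℝ) ≥ -(ε * ‖y‖ * ‖x - y‖) := by
    have hlb : (inner ℝ (T y - Tm y) (x - y) : ℝ) ≥ -(ε * a * ‖y‖ * ‖x - y‖) :=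
      neg_le_of_abs_le h3
    nlinarith [h4]
  -- expand ‖x‖²
  have h6 : ‖x‖ ^ 2 = ‖y‖ ^ 2 + 2 * (inner ℝ y (x - y) : ℝ) + ‖x - y‖ ^ 2 := by
    have := norm_add_sq_real y (x - y)
    simpa [add_sub_cancel] using this
  have hε4 : ε ^ 2 ≤ 1 / 4 := by nlinarith
  nlinarith [norm_nonneg x, norm_nonneg y, norm_nonneg (x - y), h5, h6, hε4,
    sq_nonneg (ε * ‖y‖ - ‖x - y‖), sq_nonneg ‖y‖, sq_nonneg ‖x‖,
    mul_nonneg (norm_nonneg x) (norm_nonneg y),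
    mul_nonneg (norm_nonneg y) (norm_nonneg (x - y))]
end

section
/- Let g : (0,∞) → ℝ be continuous with lim_{x→0+} g(x) = g₀, let c > 0 and q ∈ (0,1). Then lim_{n→∞} Σ_{j=0}^{n−1} (q^{n−j−1} − q^{n−j}) g(c q^{j+1}) = g₀. -/
open Filter

theorem stmt_5
    (g : ℝ → ℝ) (g₀ c q : ℝ)
    (hg : ContinuousOn g (Set.Ioi 0))
    (hlim : Tendsto g (nhdsWithin 0 (Set.Ioi 0)) (nhds g₀))
    (hc : 0 < c) (hq : q ∈ Set.Ioo (0 : ℝ) 1) :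
    Tendsto
      (fun n : ℕ => ∑ j ∈ Finset.range n, (q ^ (n - j - 1) - q ^ (n - j)) * g (c * q ^ (j + 1)))
      atTop (nhds g₀) := by
  obtain ⟨hq0, hq1⟩ := hq
  -- a bound near 0
  obtain ⟨δ, hδ, hδg⟩ : ∃ δ > 0, ∀ x ∈ Set.Ioo (0:ℝ) δ, |g x - g₀| ≤ 1 := by
    have h := Metric.tendsto_nhds.mp hlim 1 one_pos
    rw [eventually_nhdsWithin_iff] at h
    obtain ⟨δ, hδ, h⟩ := Metric.eventually_nhds_iff.mp h
    refine ⟨δ, hδ, fun x hx => le_of_lt ?_⟩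
    have := h (y := x) (by simpa [Real.dist_eq, abs_of_pos hx.1] using hx.2) hx.1
    simpa [Real.dist_eq] using this
  obtain ⟨M₁, hM₁⟩ := (isCompact_Icc : IsCompact (Set.Icc δ (c*q))).exists_bound_of_continuousOn
    (hg.mono (fun x hx => lt_of_lt_of_le hδ hx.1))
  set M : ℝ := max (|g₀| + 1) M₁ with hM
  have hMpos : 0 < M := lt_of_lt_of_le (by positivity) (le_max_left _ _)
  have hMg : ∀ x ∈ Set.Ioc (0:ℝ) (c*q), |g x| ≤ M := by
    intro x hx
    rcases lt_or_ge x δ with h | h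
    · calc |g x| ≤ |g x - g₀| + |g₀| := by
            simpa using abs_add_le (g x - g₀) g₀
        _ ≤ 1 + |g₀| := by linarith [hδg x ⟨hx.1, h⟩]
        _ ≤ M := le_trans (by linarith) (le_max_left _ _)
    · calc |g x| ≤ M₁ := by simpa [Real.norm_eq_abs] using hM₁ x ⟨h, hx.2⟩
        _ ≤ M := le_max_right _ _
  set F : ℕ → ℕ → ℝ := fun n i => if i < n then (q^i - q^(i+1)) * g (c * q^(n-i)) else 0 with hF
  have hsum_eq : ∀ n : ℕ,
      (∑ j ∈ Finset.range n, (q ^ (n - j - 1) - q ^ (n - j)) * g (c * q ^ (j + 1)))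
        = ∑' i, F n i := by
    intro n
    rw [tsum_eq_sum (s := Finset.range n) (by
      intro i hi
      simp only [Finset.mem_range, not_lt] at hi
      simp [hF, Nat.not_lt.mpr hi])]
    rw [← Finset.sum_range_reflect]
    apply Finset.sum_congr rfl
    intro j hj
    simp only [Finset.mem_range] at hj
    have e1 : n - (n - 1 - j) - 1 = j := by omega
    have e2 : n - (n - 1 - j) = j + 1 := by omega
    have e3 : n - 1 - j + 1 = n - j := by omega
    rw [hF]
    simp only [hj, if_pos, e1, e2, e3]
    norm_num
  have hwnn : ∀ i : ℕ, 0 ≤ q^i - q^(i+1) := by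
    intro i
    have : q^(i+1) ≤ q^i := pow_le_pow_of_le_one hq0.le hq1.le (by omega)
    linarith
  have key : Tendsto (fun n => ∑' i, F n i) atTop (nhds (∑' i, (q^i - q^(i+1)) * g₀)) := by
    apply tendsto_tsum_of_dominated_convergence (bound := fun i => (q^i - q^(i+1)) * M)
    · have : (fun i : ℕ => (q^i - q^(i+1)) * M) = fun i => q^i * ((1-q)*M) := by
        funext i; ring
      rw [this]
      exact (summable_geometric_of_lt_one hq0.le hq1).mul_right _
    · intro k
      have h1 : Tendsto (fun n : ℕ => c * q^(n-k)) atTop (nhds 0) := by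
        have := (tendsto_pow_atTop_nhds_zero_of_lt_one hq0.le hq1).comp
          (tendsto_sub_atTop_nat k)
        simpa using (this.const_mul c)
      have h2 : Tendsto (fun n : ℕ => c * q^(n-k)) atTop (nhdsWithin 0 (Set.Ioi 0)) := by
        apply tendsto_nhdsWithin_of_tendsto_nhds_of_eventually_within _ h1
        exact Filter.Eventually.of_forall (fun n => Set.mem_Ioi.mpr (by positivity))
      have h3 : Tendsto (fun n : ℕ => (q^k - q^(k+1)) * g (c * q^(n-k))) atTop
          (nhds ((q^k - q^(k+1)) * g₀)) := tendsto_const_nhds.mul (hlim.comp h2)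
      apply h3.congr'
      filter_upwards [eventually_gt_atTop k] with n hn
      simp [hF, hn]
    · apply Filter.Eventually.of_forall
      intro n k
      rw [hF]
      by_cases h : k < n
      · simp only [h, if_pos]
        rw [Real.norm_eq_abs, abs_mul, abs_of_nonneg (hwnn k)]
        apply mul_le_mul_of_nonneg_left _ (hwnn k)
        apply hMg
        constructor
        · positivity
        · have : q^(n-k) ≤ q^1 := pow_le_pow_of_le_one hq0.le hq1.le (by omega)
          rw [pow_one] at this
          exact mul_le_mul_of_nonneg_left this hc.le
      · simp only [h, if_neg, not_false_iff, norm_zero]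
        exact mul_nonneg (hwnn k) hMpos.le
  have hts : (∑' i : ℕ, (q^i - q^(i+1)) * g₀) = g₀ := by
    have h1 : (fun i : ℕ => (q^i - q^(i+1)) * g₀) = fun i => q^i * ((1-q)*g₀) := by
      funext i; ring
    rw [h1, tsum_mul_right, tsum_geometric_of_lt_one hq0.le hq1]
    rw [← mul_assoc, inv_mul_cancel₀ (by linarith : (1:ℝ)-q ≠ 0), one_mul]
  have := key
  rw [hts] at this
  apply this.congr
  intro n
  exact (hsum_eq n).symm
end

section
/- With u_n defined by u_n = q u_{n−1} + (1−q)(T+a_nI)^{-1}K*f, u₀ = 0, f = Ky, a_n = α₀q^n, the error satisfies ‖u_n − y‖ ≤ q^n ‖y‖ + Σ_{j=0}^{n−1} (q^{n−j−1} − q^{n−j}) a_{j+1} ‖(T + a_{j+1}I)^{-1} y‖ for all n ≥ 1. -/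
theorem stmt_7
    {H : Type*} [NormedAddCommGroup H] [InnerProductSpace ℝ H] [CompleteSpace H]
    (K : H →L[ℝ] H) (y f : H) (hf : K y = f)
    (α₀ q : ℝ) (hα₀ : 0 < α₀) (hq : q ∈ Set.Ioo (0 : ℝ) 1)
    (a : ℕ → ℝ) (ha : ∀ n, a n = α₀ * q ^ n)
    (B : ℕ → (H →L[ℝ] H))
    (hB1 : ∀ n, B n * (ContinuousLinearMap.adjoint K * K + a n • (1 : H →L[ℝ] H)) = 1)
    (hB2 : ∀ n, (ContinuousLinearMap.adjoint K * K + a n • (1 : H →L[ℝ] H)) * B n = 1)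
    (u : ℕ → H) (hu0 : u 0 = 0)
    (hu : ∀ n : ℕ, 1 ≤ n →
      u n = q • u (n - 1) + (1 - q) • (B n) (ContinuousLinearMap.adjoint K f)) :
    ∀ n : ℕ, 1 ≤ n →
      ‖u n - y‖ ≤ q ^ n * ‖y‖ +
        ∑ j ∈ Finset.range n, (q ^ (n - j - 1) - q ^ (n - j)) * (a (j + 1) * ‖(B (j + 1)) y‖) := by
  obtain ⟨hq0, hq1⟩ := hq
  have hq1' : 0 ≤ 1 - q := by linarith
  have han : ∀ n, 0 < a n := fun n => by rw [ha]; positivity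
  have key : ∀ n : ℕ, 1 ≤ n →
      u n - y = q • (u (n-1) - y) - ((1-q) * a n) • B n y := by
    intro n hn
    have h := congrArg (fun T : H →L[ℝ] H => T y) (hB1 n)
    simp only [ContinuousLinearMap.mul_apply, ContinuousLinearMap.add_apply,
      ContinuousLinearMap.smul_apply, ContinuousLinearMap.one_apply,
      map_add, map_smul] at h
    rw [hu n hn, ← hf]
    have h2 : (B n) ((ContinuousLinearMap.adjoint K) (K y)) = y - a n • B n y := by
      have h3 : (ContinuousLinearMap.adjoint K) (K y) =
          (ContinuousLinearMap.adjoint K * K) y := rfl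
      rw [h3]; exact eq_sub_of_add_eq h
    rw [h2]
    module
  have hbound : ∀ n : ℕ, 1 ≤ n →
      ‖u n - y‖ ≤ q * ‖u (n-1) - y‖ + (1-q) * (a n * ‖B n y‖) := by
    intro n hn
    rw [key n hn]
    calc ‖q • (u (n-1) - y) - ((1-q) * a n) • B n y‖
        ≤ ‖q • (u (n-1) - y)‖ + ‖((1-q) * a n) • B n y‖ := norm_sub_le _ _
      _ = q * ‖u (n-1) - y‖ + (1-q) * (a n * ‖B n y‖) := by
          rw [norm_smul, norm_smul, Real.norm_eq_abs, Real.norm_eq_abs,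
            abs_of_pos hq0, abs_of_nonneg (mul_nonneg hq1' (han n).le), mul_assoc]
  intro n hn
  induction n, hn using Nat.le_induction with
  | base =>
      have h := hbound 1 le_rfl
      simp only [show (1:ℕ) - 1 = 0 from rfl, hu0, zero_sub, norm_neg] at h
      simpa [Finset.sum_range_one] using h
  | succ n hn ih =>
      have h1 := hbound (n+1) (by omega)
      simp only [Nat.add_sub_cancel] at h1
      have hsum : q * ∑ j ∈ Finset.range n,
          (q ^ (n - j - 1) - q ^ (n - j)) * (a (j + 1) * ‖(B (j + 1)) y‖)
          = ∑ j ∈ Finset.range n,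
          (q ^ (n + 1 - j - 1) - q ^ (n + 1 - j)) * (a (j + 1) * ‖(B (j + 1)) y‖) := by
        rw [Finset.mul_sum]
        refine Finset.sum_congr rfl fun j hj => ?_
        have hjn : j < n := Finset.mem_range.mp hj
        have e1 : n + 1 - j - 1 = n - j := by omega
        have e2 : n + 1 - j = (n - j) + 1 := by omega
        have e4 : q * q ^ (n - j - 1) = q ^ (n - j) := by
          rw [← pow_succ']; congr 1; omega
        rw [e1, e2, pow_succ, ← e4]
        ring
      calc ‖u (n+1) - y‖
          ≤ q * ‖u n - y‖ + (1-q) * (a (n+1) * ‖B (n+1) y‖) := h1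
        _ ≤ q * (q ^ n * ‖y‖ + ∑ j ∈ Finset.range n,
              (q ^ (n - j - 1) - q ^ (n - j)) * (a (j + 1) * ‖(B (j + 1)) y‖))
            + (1-q) * (a (n+1) * ‖B (n+1) y‖) := by
            have := ih
            nlinarith [ih, hq0]
        _ = q ^ (n+1) * ‖y‖ + (∑ j ∈ Finset.range n,
              (q ^ (n + 1 - j - 1) - q ^ (n + 1 - j)) * (a (j + 1) * ‖(B (j + 1)) y‖)
              + (q ^ (n + 1 - n - 1) - q ^ (n + 1 - n)) * (a (n + 1) * ‖(B (n + 1)) y‖)) := by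
            rw [← hsum]
            simp only [Nat.add_sub_cancel_left, show n + 1 - n = 1 by omega, pow_zero, pow_one]
            ring
        _ = _ := by rw [← Finset.sum_range_succ]
end

section
/- Under the assumptions Ky = f, y ⊥ N(K), a_n = α₀q^n with α₀ > 0, q ∈ (0,1), and u_n = q u_{n−1} + (1−q)(T+a_nI)^{-1}K*f with u₀ = 0, one has ‖u_n − y‖ → 0 as n → ∞. -/
open Filter

section AuxFor9
variable {H : Type*} [NormedAddCommGroup H] [InnerProductSpace ℝ H] [CompleteSpace H]

/-- If `(T + a) z = x` with `a > 0` and `T = K*K`, then `a * ‖z‖ ≤ ‖x‖`. -/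
lemma key_bound_9 (K : H →L[ℝ] H) (aa : ℝ) (haa : 0 < aa) (z x : H)
    (h : (ContinuousLinearMap.adjoint K * K) z + aa • z = x) : aa * ‖z‖ ≤ ‖x‖ := by
  set T := ContinuousLinearMap.adjoint K * K with hT
  have hTz : (inner ℝ (T z) z : ℝ) = ‖K z‖ ^ 2 := by
    rw [hT, ContinuousLinearMap.mul_apply, ContinuousLinearMap.adjoint_inner_left,
      real_inner_self_eq_norm_sq]
  have hx2 : ‖x‖ ^ 2 = ‖T z‖ ^ 2 + 2 * (aa * ‖K z‖ ^ 2) + aa ^ 2 * ‖z‖ ^ 2 := by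
    rw [← h, norm_add_sq_real, real_inner_smul_right, hTz, norm_smul]
    simp [abs_of_pos haa, mul_pow]
  have h2 : (aa * ‖z‖) ^ 2 ≤ ‖x‖ ^ 2 := by nlinarith [norm_nonneg (T z), norm_nonneg (K z)]
  exact le_of_pow_le_pow_left₀ two_ne_zero (norm_nonneg x) (by rwa [mul_pow] at h2 ⊢)

lemma aux_tendsto_9 (q : ℝ) (hq0 : 0 < q) (hq1 : q < 1) (x d : ℕ → ℝ)
    (hx : ∀ n, 0 ≤ x n) (hrec : ∀ n, x (n + 1) ≤ q * x n + d (n + 1))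
    (hd : Tendsto d atTop (nhds 0)) : Tendsto x atTop (nhds 0) := by
  rw [Metric.tendsto_atTop]
  intro ε hε
  have h1q : (0:ℝ) < 1 - q := by linarith
  have hε2 : 0 < (1 - q) * ε / 2 := by positivity
  obtain ⟨N, hN⟩ := (Metric.tendsto_atTop.mp hd) ((1 - q) * ε / 2) hε2
  have hstep : ∀ k : ℕ, x (N + k) ≤ q ^ k * x N + ε / 2 := by
    intro k
    induction k with
    | zero => simp; nlinarith [hx N]
    | succ k ih =>
      have hd' : d (N + k + 1) < (1 - q) * ε / 2 := by
        have := hN (N + k + 1) (by omega)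
        rw [Real.dist_eq, sub_zero] at this
        exact lt_of_le_of_lt (le_abs_self _) this
      calc x (N + (k + 1)) = x (N + k + 1) := by ring_nf
        _ ≤ q * x (N + k) + d (N + k + 1) := hrec (N + k)
        _ ≤ q * (q ^ k * x N + ε / 2) + (1 - q) * ε / 2 := by
            have := mul_le_mul_of_nonneg_left ih hq0.le
            nlinarith
        _ = q ^ (k + 1) * x N + ε / 2 := by ring
  have hpow : Tendsto (fun k : ℕ => q ^ k * x N) atTop (nhds 0) := by
    simpa using (tendsto_pow_atTop_nhds_zero_of_lt_one hq0.le hq1).mul_const (x N)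
  obtain ⟨M, hM⟩ := (Metric.tendsto_atTop.mp hpow) (ε / 2) (by positivity)
  refine ⟨N + M, fun n hn => ?_⟩
  have hkey : x n ≤ q ^ (n - N) * x N + ε / 2 := by
    have := hstep (n - N)
    rwa [Nat.add_sub_cancel' (by omega)] at this
  have hM' : q ^ (n - N) * x N < ε / 2 := by
    have := hM (n - N) (by omega)
    rw [Real.dist_eq, sub_zero] at this
    exact lt_of_le_of_lt (le_abs_self _) this
  rw [Real.dist_eq, sub_zero, abs_of_nonneg (hx n)]
  linarith

end AuxFor9

theorem stmt_9
    {H : Type*} [NormedAddCommGroup H] [InnerProductSpace ℝ H] [CompleteSpace H]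
    (K : H →L[ℝ] H) (y f : H) (hf : K y = f)
    (hy : ∀ z : H, K z = 0 → inner ℝ y z = (0 : ℝ))
    (α₀ q : ℝ) (hα₀ : 0 < α₀) (hq : q ∈ Set.Ioo (0 : ℝ) 1)
    (a : ℕ → ℝ) (ha : ∀ n, a n = α₀ * q ^ n)
    (B : ℕ → (H →L[ℝ] H))
    (hB1 : ∀ n, B n * (ContinuousLinearMap.adjoint K * K + a n • (1 : H →L[ℝ] H)) = 1)
    (hB2 : ∀ n, (ContinuousLinearMap.adjoint K * K + a n • (1 : H →L[ℝ] H)) * B n = 1)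
    (u : ℕ → H) (hu0 : u 0 = 0)
    (hu : ∀ n : ℕ, 1 ≤ n →
      u n = q • u (n - 1) + (1 - q) • (B n) (ContinuousLinearMap.adjoint K f)) :
    Tendsto (fun n : ℕ => ‖u n - y‖) atTop (nhds 0) := by
  obtain ⟨hq0, hq1⟩ := hq
  set T := ContinuousLinearMap.adjoint K * K with hT
  have han : ∀ n, 0 < a n := fun n => by rw [ha]; positivity
  -- (T + a n) ∘ B n = id pointwise
  have hB2' : ∀ n (x : H), T (B n x) + a n • B n x = x := by
    intro n x
    have := DFunLike.congr_fun (hB2 n) x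
    simpa [ContinuousLinearMap.mul_apply, ContinuousLinearMap.add_apply,
      ContinuousLinearMap.smul_apply] using this
  -- B n ∘ (T + a n) = id pointwise
  have hB1' : ∀ n (w : H), B n (T w + a n • w) = w := by
    intro n w
    have := DFunLike.congr_fun (hB1 n) w
    simpa [ContinuousLinearMap.mul_apply, ContinuousLinearMap.add_apply,
      ContinuousLinearMap.smul_apply] using this
  have hBT : ∀ n (w : H), B n (T w) = w - a n • B n w := by
    intro n w
    have h1 := hB1' n w
    have : B n (T w) + a n • B n w = w := by
      rw [← map_smul, ← map_add]; exact h1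
    linear_combination (norm := module) this
  -- bound: a n * ‖B n x‖ ≤ ‖x‖
  have hbound : ∀ n (x : H), a n * ‖B n x‖ ≤ ‖x‖ :=
    fun n x => key_bound_9 K (a n) (han n) (B n x) x (hB2' n x)
  -- y is in the closure of the range of T
  have hyclos : y ∈ closure (Set.range fun w => T w) := by
    have hmem : y ∈ (LinearMap.range ((T : H →L[ℝ] H) : H →ₗ[ℝ] H))ᗮᗮ := by
      rw [Submodule.mem_orthogonal]
      intro z hz
      have hzT : (inner ℝ (T z) z : ℝ) = 0 := by
        have hm : T z ∈ LinearMap.range ((T : H →L[ℝ] H) : H →ₗ[ℝ] H) := ⟨z, rfl⟩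
        exact (Submodule.mem_orthogonal _ _).mp hz (T z) hm
      have hKz : K z = 0 := by
        have heq : (inner ℝ (T z) z : ℝ) = ‖K z‖ ^ 2 := by
          rw [hT, ContinuousLinearMap.mul_apply, ContinuousLinearMap.adjoint_inner_left,
            real_inner_self_eq_norm_sq]
        have h0 : ‖K z‖ ^ 2 = 0 := by rw [← heq, hzT]
        have hn0 : ‖K z‖ = 0 := by nlinarith [norm_nonneg (K z)]
        exact norm_eq_zero.mp hn0
      rw [real_inner_comm]
      exact hy z hKz
    rw [Submodule.orthogonal_orthogonal_eq_closure] at hmem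
    have h2 : y ∈ closure ((LinearMap.range ((T : H →L[ℝ] H) : H →ₗ[ℝ] H) : Submodule ℝ H) : Set H) := hmem
    simpa [LinearMap.coe_range] using h2
  -- a n → 0
  have haten : Tendsto a atTop (nhds 0) := by
    have : Tendsto (fun n : ℕ => α₀ * q ^ n) atTop (nhds 0) := by
      simpa using ((tendsto_pow_atTop_nhds_zero_of_lt_one hq0.le hq1).const_mul α₀)
    simpa [ha] using this.congr (fun n => (ha n).symm)
  -- c n := a n * ‖B n y‖ → 0
  have hc : Tendsto (fun n => a n * ‖B n y‖) atTop (nhds 0) := by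
    rw [Metric.tendsto_atTop]
    intro ε hε
    obtain ⟨w, hw⟩ : ∃ w : H, ‖y - T w‖ < ε / 2 := by
      obtain ⟨p, hp, hpd⟩ := Metric.mem_closure_iff.mp hyclos (ε / 2) (by positivity)
      obtain ⟨w, rfl⟩ := hp
      exact ⟨w, by rwa [← dist_eq_norm]⟩
    obtain ⟨N, hN⟩ := (Metric.tendsto_atTop.mp haten) (ε / (4 * (‖w‖ + 1))) (by positivity)
    refine ⟨N, fun n hn => ?_⟩
    have hanlt : a n < ε / (4 * (‖w‖ + 1)) := by
      have := hN n hn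
      rw [Real.dist_eq, sub_zero, abs_of_pos (han n)] at this
      exact this
    -- split B n y = B n (y - T w) + B n (T w)
    have hsplit : B n y = B n (y - T w) + (w - a n • B n w) := by
      rw [← hBT n w, ← map_add]
      congr 1
      abel
    have h1 : a n * ‖B n (y - T w)‖ ≤ ‖y - T w‖ := hbound n (y - T w)
    have h2 : a n * ‖B n w‖ ≤ ‖w‖ := hbound n w
    have h3 : a n * ‖B n y‖ ≤ a n * ‖B n (y - T w)‖ + a n * ‖w‖ + a n * (a n * ‖B n w‖) := by
      have : ‖B n y‖ ≤ ‖B n (y - T w)‖ + (‖w‖ + a n * ‖B n w‖) := by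
        rw [hsplit]
        refine (norm_add_le _ _).trans ?_
        gcongr
        refine (norm_sub_le _ _).trans ?_
        rw [norm_smul, Real.norm_eq_abs, abs_of_pos (han n)]
      nlinarith [han n, norm_nonneg (B n (y - T w)), norm_nonneg w, norm_nonneg (B n w),
        mul_le_mul_of_nonneg_left this (han n).le]
    have h4 : a n * ‖w‖ ≤ ε / 4 := by
      have hwle : ‖w‖ ≤ ‖w‖ + 1 := by linarith
      calc a n * ‖w‖ ≤ (ε / (4 * (‖w‖ + 1))) * (‖w‖ + 1) := by
            apply mul_le_mul hanlt.le hwle (norm_nonneg w)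
            positivity
        _ = ε / 4 := by field_simp
    have h5 : a n * (a n * ‖B n w‖) ≤ ε / 4 := by
      calc a n * (a n * ‖B n w‖) ≤ a n * ‖w‖ :=
            mul_le_mul_of_nonneg_left h2 (han n).le
        _ ≤ ε / 4 := h4
    rw [Real.dist_eq, sub_zero, abs_of_nonneg (mul_nonneg (han n).le (norm_nonneg _))]
    calc a n * ‖B n y‖ ≤ a n * ‖B n (y - T w)‖ + a n * ‖w‖ + a n * (a n * ‖B n w‖) := h3
      _ ≤ ‖y - T w‖ + ε / 4 + ε / 4 := by linarith
      _ < ε / 2 + ε / 4 + ε / 4 := by linarith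
      _ = ε := by ring
  -- the recursion for the error
  have hrec : ∀ n : ℕ, ‖u (n + 1) - y‖ ≤ q * ‖u n - y‖ + (1 - q) * (a (n + 1) * ‖B (n + 1) y‖) := by
    intro n
    have hAf : ContinuousLinearMap.adjoint K f = T y := by
      rw [← hf, hT, ContinuousLinearMap.mul_apply]
    have hun : u (n + 1) = q • u n + (1 - q) • (y - a (n + 1) • B (n + 1) y) := by
      have := hu (n + 1) (by omega)
      simpa [hAf, hBT (n + 1) y] using this
    have hid : u (n + 1) - y = q • (u n - y) - ((1 - q) * a (n + 1)) • B (n + 1) y := by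
      rw [hun]
      module
    rw [hid]
    refine (norm_sub_le _ _).trans ?_
    rw [norm_smul, norm_smul, Real.norm_eq_abs, Real.norm_eq_abs,
      abs_of_pos hq0, abs_of_pos (mul_pos (by linarith : (0:ℝ) < 1 - q) (han (n + 1)))]
    · ring_nf
      nlinarith [han (n+1), norm_nonneg (B (n+1) y)]
  exact aux_tendsto_9 q hq0 hq1 (fun n => ‖u n - y‖) (fun n => (1 - q) * (a n * ‖B n y‖))
    (fun n => norm_nonneg _) hrec
    (by simpa using hc.const_mul (1 - q))
end

section
/- Suppose at each step ‖(T+a_nI + (T^{(m_n)}−T))^{-1}K*‖ ≤ 1/√(a_n) and ‖K*_{m_n} − K*‖ ≤ √(a_n)/2, and ‖f − f_δ‖ ≤ δ. If u_{n,m_n} = q u_{n−1,m_{n−1}} + (1−q) T_{a_n,m_n}^{-1} K*_{m_n} f and u^δ_{n,m_n} = q u^δ_{n−1,m_{n−1}} + (1−q) T_{a_n,m_n}^{-1} K*_{m_n} f_δ with equal zero initial data, then ‖u_{n,m_n} − u^δ_{n,m_n}‖ ≤ (√q/(1 − q^{3/2})) · 2δ/(√q √(a_n)). -/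
private lemma stmt_11_alg (δ q A : ℝ) (hA : A ≠ 0) (hsq : Real.sqrt q ≠ 0)
    (hne : 1 - q * Real.sqrt q ≠ 0) :
    q * (2 * δ / ((1 - q * Real.sqrt q) * A)) + 2 * δ / (Real.sqrt q * A)
      = 2 * δ / ((1 - q * Real.sqrt q) * (Real.sqrt q * A)) := by
  field_simp
  ring


theorem stmt_11
    {H : Type*} [NormedAddCommGroup H] [InnerProductSpace ℝ H] [CompleteSpace H]
    (K : H →L[ℝ] H) (f fδ : H) (δ : ℝ) (hδ : 0 < δ) (hfδ : ‖f - fδ‖ ≤ δ)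
    (α₀ q : ℝ) (hα₀ : 0 < α₀) (hq : q ∈ Set.Ioo (0 : ℝ) 1)
    (a : ℕ → ℝ) (ha : ∀ n, a n = α₀ * q ^ n)
    -- B n is the inverse T_{a_n,m_n}⁻¹, with the bounds guaranteed by ‖T − T^{(m_n)}‖ ≤ a_n/2
    (B : ℕ → (H →L[ℝ] H))
    (hBnorm : ∀ n : ℕ, 1 ≤ n → ‖B n‖ ≤ 2 / a n)
    (hBK : ∀ n : ℕ, 1 ≤ n → ‖B n * ContinuousLinearMap.adjoint K‖ ≤ 1 / Real.sqrt (a n))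
    -- Km n is the approximation K*_{m_n} of the adjoint K*
    (Km : ℕ → (H →L[ℝ] H))
    (hKm : ∀ n : ℕ, 1 ≤ n → ‖Km n - ContinuousLinearMap.adjoint K‖ ≤ Real.sqrt (a n) / 2)
    (u uδ : ℕ → H) (hu0 : u 0 = 0) (huδ0 : uδ 0 = 0)
    (hu : ∀ n : ℕ, 1 ≤ n → u n = q • u (n - 1) + (1 - q) • (B n) ((Km n) f))
    (huδ : ∀ n : ℕ, 1 ≤ n → uδ n = q • uδ (n - 1) + (1 - q) • (B n) ((Km n) fδ)) :
    ∀ n : ℕ, ‖u n - uδ n‖ ≤ (Real.sqrt q / (1 - q ^ ((3 : ℝ) / 2))) *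
      (2 * δ / (Real.sqrt q * Real.sqrt (a n))) := by
  obtain ⟨hq0, hq1⟩ := hq
  set s : ℝ := q ^ ((3 : ℝ) / 2) with hs_def
  have hs0 : 0 < s := Real.rpow_pos_of_pos hq0 _
  have hs1 : s < 1 := Real.rpow_lt_one hq0.le hq1 (by norm_num)
  have h1s : 0 < 1 - s := by linarith
  have hsq : 0 < Real.sqrt q := Real.sqrt_pos.mpr hq0
  have hqsq : q * Real.sqrt q = s := by
    rw [hs_def, Real.sqrt_eq_rpow, show ((3 : ℝ) / 2) = 1 + 1/2 by norm_num,
      Real.rpow_add hq0, Real.rpow_one]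
  have han : ∀ n, 0 < a n := fun n => by
    rw [ha]; positivity
  have hsan : ∀ n, 0 < Real.sqrt (a n) := fun n => Real.sqrt_pos.mpr (han n)
  have key : ∀ n, ‖u n - uδ n‖ ≤ 2 * δ / ((1 - s) * Real.sqrt (a n)) := by
    intro n
    induction n with
    | zero =>
      rw [hu0, huδ0, sub_zero, norm_zero]
      exact div_nonneg (by positivity) (mul_nonneg h1s.le (hsan 0).le)
    | succ m ih =>
      have h1 : 1 ≤ m + 1 := le_add_self
      have h := han (m+1)
      have hs := hsan (m+1)
      have hsq2 : Real.sqrt (a (m+1)) * Real.sqrt (a (m+1)) = a (m+1) :=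
        Real.mul_self_sqrt h.le
      have hdiff : u (m + 1) - uδ (m + 1)
          = q • (u m - uδ m) + (1 - q) • ((B (m+1)) ((Km (m+1)) (f - fδ))) := by
        rw [hu _ h1, huδ _ h1]
        simp only [Nat.add_sub_cancel, map_sub, smul_sub]
        abel
      have hstep : ‖(B (m+1)) ((Km (m+1)) (f - fδ))‖ ≤ 2 * δ / Real.sqrt (a (m+1)) := by
        set v := f - fδ with hv_def
        have hv : ‖v‖ ≤ δ := hfδ
        have hsplit : (B (m+1)) ((Km (m+1)) v)
            = (B (m+1)) ((Km (m+1) - ContinuousLinearMap.adjoint K) v)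
              + (B (m+1) * ContinuousLinearMap.adjoint K) v := by
          simp [ContinuousLinearMap.sub_apply, map_sub, ContinuousLinearMap.mul_apply]
        have hBKm : ‖B (m+1)‖ * ‖Km (m+1) - ContinuousLinearMap.adjoint K‖
            ≤ 1 / Real.sqrt (a (m+1)) := by
          have := mul_le_mul (hBnorm _ h1) (hKm _ h1) (norm_nonneg _)
            (div_nonneg (by norm_num) h.le)
          refine this.trans_eq ?_
          field_simp
          nlinarith [hsq2]
        have t1 : ‖(B (m+1)) ((Km (m+1) - ContinuousLinearMap.adjoint K) v)‖
            ≤ (1 / Real.sqrt (a (m+1))) * δ := by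
          calc ‖(B (m+1)) ((Km (m+1) - ContinuousLinearMap.adjoint K) v)‖
              ≤ ‖B (m+1)‖ * ‖(Km (m+1) - ContinuousLinearMap.adjoint K) v‖ :=
                ContinuousLinearMap.le_opNorm _ _
            _ ≤ ‖B (m+1)‖ * (‖Km (m+1) - ContinuousLinearMap.adjoint K‖ * ‖v‖) := by
                gcongr
                exact ContinuousLinearMap.le_opNorm _ _
            _ = (‖B (m+1)‖ * ‖Km (m+1) - ContinuousLinearMap.adjoint K‖) * ‖v‖ :=
                (mul_assoc _ _ _).symm
            _ ≤ (1 / Real.sqrt (a (m+1))) * δ :=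
                mul_le_mul hBKm hv (norm_nonneg _) (one_div_nonneg.mpr hs.le)
        have t2 : ‖(B (m+1) * ContinuousLinearMap.adjoint K) v‖
            ≤ (1 / Real.sqrt (a (m+1))) * δ := by
          calc ‖(B (m+1) * ContinuousLinearMap.adjoint K) v‖
              ≤ ‖B (m+1) * ContinuousLinearMap.adjoint K‖ * ‖v‖ :=
                ContinuousLinearMap.le_opNorm _ _
            _ ≤ (1 / Real.sqrt (a (m+1))) * δ :=
                mul_le_mul (hBK _ h1) hv (norm_nonneg _) (one_div_nonneg.mpr hs.le)
        calc ‖(B (m+1)) ((Km (m+1)) v)‖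
            ≤ ‖(B (m+1)) ((Km (m+1) - ContinuousLinearMap.adjoint K) v)‖
              + ‖(B (m+1) * ContinuousLinearMap.adjoint K) v‖ := by
              rw [hsplit]; exact norm_add_le _ _
          _ ≤ (1 / Real.sqrt (a (m+1))) * δ + (1 / Real.sqrt (a (m+1))) * δ :=
              add_le_add t1 t2
          _ = 2 * δ / Real.sqrt (a (m+1)) := by ring
      have hnorm : ‖u (m+1) - uδ (m+1)‖
          ≤ q * ‖u m - uδ m‖ + (1 - q) * (2 * δ / Real.sqrt (a (m+1))) := by
        rw [hdiff]
        refine (norm_add_le _ _).trans ?_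
        rw [norm_smul, norm_smul, Real.norm_eq_abs, Real.norm_eq_abs,
          abs_of_pos hq0, abs_of_pos (by linarith : (0:ℝ) < 1 - q)]
        gcongr
      have hX : (0:ℝ) ≤ 2 * δ / Real.sqrt (a (m+1)) := by positivity
      have h2 : (1 - q) * (2 * δ / Real.sqrt (a (m+1))) ≤ 2 * δ / Real.sqrt (a (m+1)) := by
        nlinarith
      have hrel : Real.sqrt (a (m+1)) = Real.sqrt q * Real.sqrt (a m) := by
        rw [← Real.sqrt_mul hq0.le, ha, ha]; ring_nf
      have hA := hsan m
      calc ‖u (m+1) - uδ (m+1)‖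
          ≤ q * ‖u m - uδ m‖ + (1 - q) * (2 * δ / Real.sqrt (a (m+1))) := hnorm
        _ ≤ q * (2 * δ / ((1 - s) * Real.sqrt (a m))) + 2 * δ / Real.sqrt (a (m+1)) :=
            add_le_add (mul_le_mul_of_nonneg_left ih hq0.le) h2
        _ = 2 * δ / ((1 - s) * Real.sqrt (a (m+1))) := by
            rw [hrel, ← hqsq]
            exact stmt_11_alg δ q _ hA.ne' hsq.ne' (by rw [hqsq]; exact h1s.ne')
  intro n
  have heq : (Real.sqrt q / (1 - s)) * (2 * δ / (Real.sqrt q * Real.sqrt (a n)))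
      = 2 * δ / ((1 - s) * Real.sqrt (a n)) := by
    rw [div_mul_div_comm]
    rw [div_eq_div_iff (mul_ne_zero h1s.ne' (mul_ne_zero hsq.ne' (hsan n).ne'))
      (mul_ne_zero h1s.ne' (hsan n).ne')]
    ring
  rw [heq]
  exact key n
end

section
/- If Q = KK*, a > 0, ε ∈ (0, 1/2], and Q^{(m)} is a bounded operator with ‖Q − Q^{(m)}‖ ≤ ε a, then Q_{a,m} := Q^{(m)} + aI is boundedly invertible with ‖Q_{a,m}^{-1}‖ ≤ 2/a and ‖Q_{a,m}^{-1} K‖ ≤ 1/√a. -/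
open ContinuousLinearMap InnerProductSpace RealInnerProductSpace

theorem aux_inv_13 {H : Type*} [NormedAddCommGroup H] [InnerProductSpace ℝ H] [CompleteSpace H]
    (Qa : H →L[ℝ] H) (a : ℝ) (ha : 0 < a) (hco : ∀ v, a * ‖v‖ * ‖v‖ ≤ ⟪Qa v, v⟫_ℝ) :
    ∃ R : H →L[ℝ] H, R * Qa = 1 ∧ Qa * R = 1 ∧ ‖R‖ ≤ 1 / a := by
  set B : H →L[ℝ] H →L[ℝ] ℝ := (innerSL ℝ).comp Qa with hB
  have hBapp : ∀ v w, B v w = ⟪Qa v, w⟫_ℝ := fun v w => rfl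
  have coercive : IsCoercive B := ⟨a, ha, fun u => by rw [hBapp]; exact hco u⟩
  have hsharp : continuousLinearMapOfBilin (𝕜 := ℝ) B = Qa := by
    ext v
    exact (unique_continuousLinearMapOfBilin B (fun w => hBapp v w)).symm
  have hker : LinearMap.ker (Qa : H →ₗ[ℝ] H) = ⊥ := hsharp ▸ coercive.ker_eq_bot
  have hrange : LinearMap.range (Qa : H →ₗ[ℝ] H) = ⊤ := hsharp ▸ coercive.range_eq_top
  set e := ContinuousLinearEquiv.ofBijective Qa hker hrange with he
  have hlow : ∀ v, a * ‖v‖ ≤ ‖Qa v‖ := by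
    intro v
    rcases eq_or_ne v 0 with rfl | hv
    · simp
    · have h1 : a * ‖v‖ * ‖v‖ ≤ ‖Qa v‖ * ‖v‖ :=
        (hco v).trans (real_inner_le_norm _ _)
      exact le_of_mul_le_mul_right h1 (norm_pos_iff.mpr hv)
  refine ⟨e.symm.toContinuousLinearMap, ?_, ?_, ?_⟩
  · ext v
    show e.symm (Qa v) = v
    rw [show Qa v = e v from rfl]; exact e.symm_apply_apply v
  · ext v
    show Qa (e.symm v) = v
    exact e.apply_symm_apply v
  · refine opNorm_le_bound _ (by positivity) fun x => ?_
    have := hlow (e.symm x)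
    rw [show Qa (e.symm x) = x from e.apply_symm_apply x] at this
    rw [div_mul_eq_mul_div, le_div_iff₀ ha]
    show ‖e.symm x‖ * a ≤ 1 * ‖x‖
    nlinarith

set_option maxHeartbeats 1000000 in
theorem stmt_13
    {H : Type*} [NormedAddCommGroup H] [InnerProductSpace ℝ H] [CompleteSpace H]
    (K : H →L[ℝ] H) (a ε : ℝ) (ha : 0 < a) (hε : ε ∈ Set.Ioc (0 : ℝ) (1 / 2))
    (Qm : H →L[ℝ] H)
    (hQm : ‖K * ContinuousLinearMap.adjoint K - Qm‖ ≤ ε * a) :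
    ∃ B : H →L[ℝ] H,
      B * (Qm + a • (1 : H →L[ℝ] H)) = 1 ∧
      (Qm + a • (1 : H →L[ℝ] H)) * B = 1 ∧
      ‖B‖ ≤ 2 / a ∧ ‖B * K‖ ≤ 1 / Real.sqrt a := by
  obtain ⟨hε0, hε2⟩ := hε
  set Q : H →L[ℝ] H := K * ContinuousLinearMap.adjoint K with hQ
  set Qa : H →L[ℝ] H := Q + a • (1 : H →L[ℝ] H) with hQa
  -- the key quadratic form identity
  have hQform : ∀ v : H, ⟪Q v, v⟫_ℝ = ‖(ContinuousLinearMap.adjoint K) v‖ ^ 2 := by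
    intro v
    have h1 : Q v = K ((ContinuousLinearMap.adjoint K) v) := rfl
    rw [h1, real_inner_comm, ← ContinuousLinearMap.adjoint_inner_left,
      real_inner_self_eq_norm_sq]
  have hco : ∀ v : H, a * ‖v‖ * ‖v‖ ≤ ⟪Qa v, v⟫_ℝ := by
    intro v
    have h1 : Qa v = Q v + a • v := by simp [hQa]
    rw [h1, inner_add_left, real_inner_smul_left, real_inner_self_eq_norm_mul_norm, hQform]
    nlinarith [sq_nonneg ‖(ContinuousLinearMap.adjoint K) v‖]
  obtain ⟨R, hRQa, hQaR, hRnorm⟩ := aux_inv_13 Qa a ha hco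
  have hQaRapp : ∀ v : H, Qa (R v) = v := by
    intro v
    have := DFunLike.congr_fun hQaR v
    simpa [ContinuousLinearMap.mul_apply] using this
  -- the perturbation
  set D : H →L[ℝ] H := Qm - Q with hD
  have hDnorm : ‖D‖ ≤ ε * a := by
    rw [hD, ← norm_neg]
    simpa using hQm
  set E : H →L[ℝ] H := R * D with hE
  have hEnorm : ‖E‖ ≤ ε := by
    calc ‖E‖ ≤ ‖R‖ * ‖D‖ := norm_mul_le _ _
    _ ≤ (1 / a) * (ε * a) := by
        apply mul_le_mul hRnorm hDnorm (norm_nonneg _) (by positivity)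
    _ = ε := by field_simp
  have hElt : ‖(-E)‖ < 1 := by
    rw [norm_neg]; linarith
  set u : (H →L[ℝ] H)ˣ := Units.oneSub (-E) hElt with hu
  have huval : (u : H →L[ℝ] H) = 1 + E := by
    simp [hu, Units.oneSub, sub_neg_eq_add]
  set S : H →L[ℝ] H := ↑u⁻¹ with hS
  have hS1 : S * (1 + E) = 1 := by rw [← huval]; exact u.inv_mul
  have hS2 : (1 + E) * S = 1 := by rw [← huval]; exact u.mul_inv
  have hSnorm : ‖S‖ ≤ 2 := by
    have hid : S = 1 - E * S := by
      have : (1 + E) * S = S + E * S := by noncomm_ring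
      rw [this] at hS2
      rw [← hS2]; noncomm_ring
    have h1 : ‖S‖ ≤ ‖(1 : H →L[ℝ] H)‖ + ‖E‖ * ‖S‖ := by
      calc ‖S‖ = ‖(1 : H →L[ℝ] H) - E * S‖ := by rw [← hid]
      _ ≤ ‖(1 : H →L[ℝ] H)‖ + ‖E * S‖ := norm_sub_le _ _
      _ ≤ ‖(1 : H →L[ℝ] H)‖ + ‖E‖ * ‖S‖ := by
          gcongr; exact norm_mul_le _ _
    have hone : ‖(1 : H →L[ℝ] H)‖ ≤ 1 := ContinuousLinearMap.norm_id_le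
    have hES : ‖E‖ * ‖S‖ ≤ (1/2) * ‖S‖ :=
      mul_le_mul_of_nonneg_right (hEnorm.trans hε2) (norm_nonneg _)
    nlinarith [norm_nonneg S]
  -- factorization Qm + a•1 = Qa * (1 + E)
  have hfact : Qm + a • (1 : H →L[ℝ] H) = Qa * (1 + E) := by
    have : Qa * (1 + E) = Qa + (Qa * R) * D := by rw [hE]; noncomm_ring
    rw [this, hQaR, one_mul, hQa, hD]; noncomm_ring
  refine ⟨S * R, ?_, ?_, ?_, ?_⟩
  · rw [hfact]
    calc S * R * (Qa * (1 + E)) = S * ((R * Qa) * (1 + E)) := by noncomm_ring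
    _ = 1 := by rw [hRQa, one_mul, hS1]
  · rw [hfact]
    calc Qa * (1 + E) * (S * R) = Qa * (((1 + E) * S) * R) := by noncomm_ring
    _ = 1 := by rw [hS2, one_mul, hQaR]
  · calc ‖S * R‖ ≤ ‖S‖ * ‖R‖ := norm_mul_le _ _
    _ ≤ 2 * (1 / a) := by
        apply mul_le_mul hSnorm hRnorm (norm_nonneg _) (by norm_num)
    _ = 2 / a := by ring
  · -- the refined bound on ‖R * K‖
    have hsa : 0 < Real.sqrt a := Real.sqrt_pos.mpr ha
    have hsq : Real.sqrt a ^ 2 = a := Real.sq_sqrt ha.le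
    have hRK : ‖R * K‖ ≤ 1 / (2 * Real.sqrt a) := by
      refine opNorm_le_bound _ (by positivity) fun x => ?_
      set y : H := R (K x) with hy
      have hQay : Qa y = K x := hQaRapp (K x)
      have hinner : ⟪Qa y, y⟫_ℝ = ⟪x, (ContinuousLinearMap.adjoint K) y⟫_ℝ := by
        rw [hQay, ← ContinuousLinearMap.adjoint_inner_right]
      have hlhs : ‖(ContinuousLinearMap.adjoint K) y‖ ^ 2 + a * ‖y‖ ^ 2 ≤
          ‖x‖ * ‖(ContinuousLinearMap.adjoint K) y‖ := by
        have h1 : Qa y = Q y + a • y := by simp [hQa]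
        have h2 : ⟪Qa y, y⟫_ℝ = ‖(ContinuousLinearMap.adjoint K) y‖ ^ 2 + a * ‖y‖ ^ 2 := by
          rw [h1, inner_add_left, real_inner_smul_left, real_inner_self_eq_norm_sq, hQform]
        rw [← h2, hinner]
        exact (real_inner_le_norm _ _).trans (le_of_eq rfl)
      have hy2 : 4 * a * ‖y‖ ^ 2 ≤ ‖x‖ ^ 2 := by
        nlinarith [sq_nonneg (‖x‖ - 2 * ‖(ContinuousLinearMap.adjoint K) y‖)]
      have hsq2 : (2 * Real.sqrt a * ‖y‖) ^ 2 ≤ ‖x‖ ^ 2 := by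
        calc (2 * Real.sqrt a * ‖y‖) ^ 2 = 4 * (Real.sqrt a ^ 2) * ‖y‖ ^ 2 := by ring
        _ = 4 * a * ‖y‖ ^ 2 := by rw [hsq]
        _ ≤ ‖x‖ ^ 2 := hy2
      have hle : 2 * Real.sqrt a * ‖y‖ ≤ ‖x‖ :=
        (pow_le_pow_iff_left₀ (by positivity) (norm_nonneg x) two_ne_zero).mp hsq2
      show ‖y‖ ≤ 1 / (2 * Real.sqrt a) * ‖x‖
      rw [div_mul_eq_mul_div, one_mul, le_div_iff₀ (by positivity)]
      linarith
    calc ‖S * R * K‖ = ‖S * (R * K)‖ := by rw [mul_assoc]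
    _ ≤ ‖S‖ * ‖R * K‖ := norm_mul_le _ _
    _ ≤ 2 * (1 / (2 * Real.sqrt a)) := by
        apply mul_le_mul hSnorm hRK (norm_nonneg _) (by norm_num)
    _ = 1 / Real.sqrt a := by field_simp
end

section
/- Define G_{n,m_n} recursively by G_{0,m_0} = 0 and G_{n,m_n} = q G_{n−1,m_{n−1}} + (1−q) a_n ‖Q_{a_n,m_n}^{-1} f_δ‖, where ‖Q − Q^{(m_n)}‖ ≤ a_n/2, ‖f_δ − f‖ ≤ δ, f = Ky, and a_n = α₀q^n. Then G_{n,m_n} ≤ 2δ + (2(1−q)/(1−√q)) √(a_n) ‖y‖ for all n ≥ 0; in particular limsup_{n→∞} G_{n,m_n} ≤ 2δ. -/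
open Filter

set_option maxHeartbeats 1600000 in
theorem stmt_15
    {H : Type*} [NormedAddCommGroup H] [InnerProductSpace ℝ H] [CompleteSpace H]
    (K : H →L[ℝ] H) (y f fδ : H) (hf : K y = f)
    (δ : ℝ) (hδ : 0 < δ) (hfδ : ‖fδ - f‖ ≤ δ)
    (α₀ q : ℝ) (hα₀ : 0 < α₀) (hq : q ∈ Set.Ioo (0 : ℝ) 1)
    (a : ℕ → ℝ) (ha : ∀ n, a n = α₀ * q ^ n)
    (Qm : ℕ → (H →L[ℝ] H))
    (hQm : ∀ n : ℕ, 1 ≤ n → ‖K * ContinuousLinearMap.adjoint K - Qm n‖ ≤ a n / 2)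
    -- B n is the inverse Q_{a_n,m_n}⁻¹ = (Q^{(m_n)} + a_n I)⁻¹
    (B : ℕ → (H →L[ℝ] H))
    (hB1 : ∀ n : ℕ, 1 ≤ n → B n * (Qm n + a n • (1 : H →L[ℝ] H)) = 1)
    (hB2 : ∀ n : ℕ, 1 ≤ n → (Qm n + a n • (1 : H →L[ℝ] H)) * B n = 1)
    (G : ℕ → ℝ) (hG0 : G 0 = 0)
    (hG : ∀ n : ℕ, 1 ≤ n → G n = q * G (n - 1) + (1 - q) * (a n * ‖(B n) fδ‖)) :
    (∀ n : ℕ, G n ≤ 2 * δ + (2 * (1 - q) / (1 - Real.sqrt q)) * Real.sqrt (a n) * ‖y‖) ∧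
    limsup G atTop ≤ 2 * δ := by
  obtain ⟨hq0, hq1⟩ := hq
  have hapos : ∀ n, 0 < a n := fun n => by rw [ha]; positivity
  set Kad := ContinuousLinearMap.adjoint K with hKad
  set C : ℝ := 2 * (1 - q) / (1 - Real.sqrt q) with hC
  have hsq0 : 0 ≤ Real.sqrt q := Real.sqrt_nonneg q
  have hsq1 : Real.sqrt q < 1 := by
    rw [show (1 : ℝ) = Real.sqrt 1 by simp]
    exact Real.sqrt_lt_sqrt (le_of_lt hq0) hq1
  have hsqsq : Real.sqrt q * Real.sqrt q = q := Real.mul_self_sqrt (le_of_lt hq0)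
  have hCpos : 0 ≤ C := by
    apply div_nonneg <;> nlinarith
  have hCkey : C * (1 - Real.sqrt q) = 2 * (1 - q) := by
    rw [hC, div_mul_cancel₀]
    nlinarith
  -- core inner product inequality
  have core : ∀ n : ℕ, 1 ≤ n → ∀ x : H,
      ‖Kad (B n x)‖ ^ 2 + (a n / 2) * ‖B n x‖ ^ 2 ≤ inner ℝ x (B n x) := by
    intro n hn x
    set u := B n x with hu
    have hx : Qm n u + a n • u = x := by
      have := congrArg (fun T : H →L[ℝ] H => T x) (hB2 n hn)
      simpa [ContinuousLinearMap.mul_apply, ContinuousLinearMap.add_apply,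
        ContinuousLinearMap.smul_apply] using this
    have h1 : (inner ℝ x u : ℝ) = inner ℝ ((Qm n) u) u + a n * ‖u‖ ^ 2 := by
      rw [← hx]
      rw [inner_add_left, real_inner_smul_left, real_inner_self_eq_norm_sq]
    have hQ : (inner ℝ ((K * Kad) u) u : ℝ) = ‖Kad u‖ ^ 2 := by
      rw [hKad, ContinuousLinearMap.mul_apply, real_inner_comm,
        ← ContinuousLinearMap.adjoint_inner_left, real_inner_self_eq_norm_sq]
    have hsplit : (inner ℝ ((Qm n) u) u : ℝ)
        = inner ℝ ((K * Kad) u) u - inner ℝ (((K * Kad) - Qm n) u) u := by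
      rw [ContinuousLinearMap.sub_apply, inner_sub_left]; ring
    have hbound : (inner ℝ (((K * Kad) - Qm n) u) u : ℝ) ≤ (a n / 2) * ‖u‖ ^ 2 := by
      calc (inner ℝ (((K * Kad) - Qm n) u) u : ℝ)
          ≤ ‖((K * Kad) - Qm n) u‖ * ‖u‖ := real_inner_le_norm _ _
        _ ≤ (‖(K * Kad) - Qm n‖ * ‖u‖) * ‖u‖ :=
            mul_le_mul_of_nonneg_right (ContinuousLinearMap.le_opNorm _ _) (norm_nonneg _)
        _ ≤ (a n / 2 * ‖u‖) * ‖u‖ := by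
            have := hQm n hn
            rw [hKad]
            nlinarith [norm_nonneg u, mul_le_mul_of_nonneg_right
              (mul_le_mul_of_nonneg_right this (norm_nonneg u)) (norm_nonneg u)]
        _ = (a n / 2) * ‖u‖ ^ 2 := by ring
    rw [h1, hsplit, hQ]
    nlinarith [hbound]
  -- general bound: a n * ‖B n x‖ ≤ 2 ‖x‖
  have bound1 : ∀ n : ℕ, 1 ≤ n → ∀ x : H, a n * ‖B n x‖ ≤ 2 * ‖x‖ := by
    intro n hn x
    have h := core n hn x
    have h2 : (inner ℝ x (B n x) : ℝ) ≤ ‖x‖ * ‖B n x‖ := real_inner_le_norm _ _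
    have hK := sq_nonneg ‖Kad (B n x)‖
    rcases eq_or_lt_of_le (norm_nonneg (B n x)) with h0 | h0
    · rw [← h0, mul_zero]; positivity
    · have := hapos n
      nlinarith
  -- bound for x = K y
  have bound2 : ∀ n : ℕ, 1 ≤ n → a n * ‖B n (K y)‖ ≤ 2 * Real.sqrt (a n) * ‖y‖ := by
    intro n hn
    have h := core n hn (K y)
    set u := B n (K y) with hu
    have h2 : (inner ℝ (K y) u : ℝ) = inner ℝ y (Kad u) := by
      rw [hKad, ContinuousLinearMap.adjoint_inner_right]
    have h3 : (inner ℝ y (Kad u) : ℝ) ≤ ‖y‖ * ‖Kad u‖ := real_inner_le_norm _ _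
    rw [h2] at h
    have key : ‖Kad u‖ ^ 2 + (a n / 2) * ‖u‖ ^ 2 ≤ ‖y‖ * ‖Kad u‖ := le_trans h h3
    clear h h2 h3
    have han := hapos n
    have hsa : Real.sqrt (a n) ^ 2 = a n := Real.sq_sqrt (le_of_lt han)
    have hsann : 0 ≤ Real.sqrt (a n) := Real.sqrt_nonneg _
    have hY := norm_nonneg y
    have hT := norm_nonneg (Kad u)
    have hS := norm_nonneg u
    set t := ‖Kad u‖ with htdef
    set s := ‖u‖ with hsdef
    clear_value t s
    clear htdef hsdef hu
    have ht : t ≤ ‖y‖ := by nlinarith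
    have hs2 : (a n / 2) * s ^ 2 ≤ ‖y‖ ^ 2 := by nlinarith
    calc a n * s = Real.sqrt ((a n * s) ^ 2) := by
          rw [Real.sqrt_sq (by positivity)]
      _ ≤ Real.sqrt ((2 * Real.sqrt (a n) * ‖y‖) ^ 2) := by
          apply Real.sqrt_le_sqrt
          nlinarith
      _ = 2 * Real.sqrt (a n) * ‖y‖ := Real.sqrt_sq (by positivity)
  -- one step bound
  have onestep : ∀ n : ℕ, 1 ≤ n →
      a n * ‖B n fδ‖ ≤ 2 * δ + 2 * Real.sqrt (a n) * ‖y‖ := by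
    intro n hn
    have hdecomp : B n fδ = B n (fδ - f) + B n (K y) := by
      rw [hf, ← map_add]; congr 1; abel
    have h1 := bound1 n hn (fδ - f)
    have h2 := bound2 n hn
    have h3 : ‖B n fδ‖ ≤ ‖B n (fδ - f)‖ + ‖B n (K y)‖ := by
      rw [hdecomp]; exact norm_add_le _ _
    have han := hapos n
    nlinarith [norm_nonneg (B n (fδ - f)), norm_nonneg (B n (K y))]
  -- main bound by induction
  have main : ∀ n : ℕ, G n ≤ 2 * δ + C * Real.sqrt (a n) * ‖y‖ := by
    intro n
    induction n with
    | zero =>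
        rw [hG0]
        have : 0 ≤ C * Real.sqrt (a 0) * ‖y‖ := by positivity
        linarith
    | succ n ih =>
        have hGn := hG (n + 1) (Nat.le_add_left 1 n)
        simp only [Nat.add_sub_cancel] at hGn
        have hstep := onestep (n + 1) (Nat.le_add_left 1 n)
        have hsa : Real.sqrt (a (n + 1)) = Real.sqrt (a n) * Real.sqrt q := by
          rw [← Real.sqrt_mul (le_of_lt (hapos n))]
          congr 1
          rw [ha, ha, pow_succ]; ring
        have hqmul : q * Real.sqrt (a n) = Real.sqrt q * Real.sqrt (a (n + 1)) := by
          rw [hsa]; linear_combination (- Real.sqrt (a n)) * hsqsq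
        have h1 : q * G n ≤ q * (2 * δ + C * Real.sqrt (a n) * ‖y‖) :=
          mul_le_mul_of_nonneg_left ih (le_of_lt hq0)
        have h2 : (1 - q) * (a (n + 1) * ‖B (n + 1) fδ‖)
            ≤ (1 - q) * (2 * δ + 2 * Real.sqrt (a (n + 1)) * ‖y‖) :=
          mul_le_mul_of_nonneg_left hstep (by linarith)
        have hcoef : q * C * Real.sqrt (a n) + (1 - q) * (2 * Real.sqrt (a (n + 1)))
            = C * Real.sqrt (a (n + 1)) := by
          have : q * C * Real.sqrt (a n) = C * Real.sqrt q * Real.sqrt (a (n + 1)) := by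
            rw [mul_comm q C, mul_assoc, hqmul]; ring
          rw [this]
          nlinarith [Real.sqrt_nonneg (a (n + 1))]
        rw [hGn]
        nlinarith [h1, h2, norm_nonneg y, Real.sqrt_nonneg (a (n + 1)),
          Real.sqrt_nonneg (a n)]
  refine ⟨main, ?_⟩
  -- limsup part
  have hGnonneg : ∀ n, 0 ≤ G n := by
    intro n
    induction n with
    | zero => rw [hG0]
    | succ n ih =>
        have hGn := hG (n + 1) (Nat.le_add_left 1 n)
        simp only [Nat.add_sub_cancel] at hGn
        rw [hGn]
        have h1 : 0 ≤ q * G n := mul_nonneg (le_of_lt hq0) ih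
        have h2 : 0 ≤ (1 - q) * (a (n + 1) * ‖B (n + 1) fδ‖) := by
          apply mul_nonneg (by linarith)
          exact mul_nonneg (le_of_lt (hapos (n + 1))) (norm_nonneg _)
        linarith
  set U : ℕ → ℝ := fun n => 2 * δ + C * Real.sqrt (a n) * ‖y‖ with hU
  have hUtend : Tendsto U atTop (nhds (2 * δ)) := by
    have h1 : Tendsto (fun n : ℕ => Real.sqrt q ^ n) atTop (nhds 0) :=
      tendsto_pow_atTop_nhds_zero_of_lt_one hsq0 hsq1
    have hpow : ∀ m : ℕ, Real.sqrt (q ^ m) = Real.sqrt q ^ m := by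
      intro m
      induction m with
      | zero => simp
      | succ m ih =>
          rw [pow_succ, Real.sqrt_mul (pow_nonneg (le_of_lt hq0) m), ih, pow_succ]
    have h2 : ∀ n : ℕ, Real.sqrt (a n) = Real.sqrt α₀ * Real.sqrt q ^ n := by
      intro n
      rw [ha, Real.sqrt_mul (le_of_lt hα₀), hpow]
    have : Tendsto (fun n : ℕ => 2 * δ + C * (Real.sqrt α₀ * Real.sqrt q ^ n) * ‖y‖)
        atTop (nhds (2 * δ + C * (Real.sqrt α₀ * 0) * ‖y‖)) := by
      apply Tendsto.const_add
      exact (((h1.const_mul _).const_mul _).mul_const _)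
    simp only [mul_zero, zero_mul, mul_zero, add_zero] at this
    convert this using 2 with n
    rw [hU]
    simp [h2 n]
  have hUbdd : IsBoundedUnder (· ≤ ·) atTop U := hUtend.isBoundedUnder_le
  have hGcobdd : IsCoboundedUnder (· ≤ ·) atTop G :=
    Filter.isCoboundedUnder_le_of_eventually_le atTop
      (x := 0) (Eventually.of_forall hGnonneg)
  calc limsup G atTop ≤ limsup U atTop :=
        limsup_le_limsup (Eventually.of_forall main) hGcobdd hUbdd
    _ = 2 * δ := hUtend.limsup_eq
end

section
/- If the stopping index n_δ is chosen by the discrepancy rule G_{n_δ,m_{n_δ}} ≤ Cδ^ε < G_{n,m_n} for 1 ≤ n < n_δ, with C > 2 and ε ∈ (0,1), and G_{n,m_n} ≤ 2δ + (2(1−q)/(1−√q))√(a_n)‖y‖ holds, then δ/√(a_{n_δ}) → 0 as δ → 0. -/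
open Filter

theorem stmt_16
    (α₀ q C ε M : ℝ) (hα₀ : 0 < α₀) (hq : q ∈ Set.Ioo (0 : ℝ) 1)
    (hC : 2 < C) (hε : ε ∈ Set.Ioo (0 : ℝ) 1) (hM : 0 ≤ M)
    (a : ℕ → ℝ) (ha : ∀ n, a n = α₀ * q ^ n)
    -- G δ is the discrepancy sequence computed from the noisy data f_δ
    (G : ℝ → ℕ → ℝ)
    (hGbound : ∀ δ : ℝ, 0 < δ → ∀ n : ℕ,
      G δ n ≤ 2 * δ + (2 * (1 - q) / (1 - Real.sqrt q)) * Real.sqrt (a n) * M)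
    (nδ : ℝ → ℕ) (hnδ1 : ∀ δ : ℝ, 0 < δ → 1 ≤ nδ δ)
    (hstop : ∀ δ : ℝ, 0 < δ → G δ (nδ δ) ≤ C * δ ^ ε)
    (hstop' : ∀ δ : ℝ, 0 < δ → ∀ n : ℕ, 1 ≤ n → n < nδ δ → C * δ ^ ε < G δ n) :
    Tendsto (fun δ : ℝ => δ / Real.sqrt (a (nδ δ))) (nhdsWithin 0 (Set.Ioi 0)) (nhds 0) := by
  obtain ⟨hq0, hq1⟩ := hq
  obtain ⟨hε0, hε1⟩ := hε
  have hsq : 0 < Real.sqrt q := Real.sqrt_pos.2 hq0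
  have hsq1 : Real.sqrt q < 1 := by
    rw [show (1:ℝ) = Real.sqrt 1 by simp]
    exact Real.sqrt_lt_sqrt (le_of_lt hq0) hq1
  set c : ℝ := 2 * (1 - q) / (1 - Real.sqrt q) with hc
  have hcpos : 0 < c := div_pos (by linarith) (by linarith)
  set K : ℝ := c * M / (Real.sqrt q * (C - 2)) with hK
  have hKnn : 0 ≤ K :=
    div_nonneg (mul_nonneg (le_of_lt hcpos) hM)
      (mul_nonneg (le_of_lt hsq) (by linarith))
  -- the dominating function
  have hbound : ∀ δ ∈ Set.Ioo (0:ℝ) 1,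
      δ / Real.sqrt (a (nδ δ)) ≤ K * δ ^ (1 - ε) + δ / Real.sqrt (α₀ * q) := by
    intro δ ⟨hδ0, hδ1⟩
    have hrnn : 0 ≤ δ ^ (1 - ε) := Real.rpow_nonneg (le_of_lt hδ0) _
    have hsqa : ∀ n, 0 < Real.sqrt (a n) := fun n => by
      rw [ha]; exact Real.sqrt_pos.2 (mul_pos hα₀ (pow_pos hq0 n))
    rcases eq_or_lt_of_le (hnδ1 δ hδ0) with h1 | h2
    · rw [← h1]
      have : δ / Real.sqrt (a 1) = δ / Real.sqrt (α₀ * q) := by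
        rw [ha]; norm_num
      rw [this]
      nlinarith [mul_nonneg hKnn hrnn]
    · -- nδ δ ≥ 2
      set n := nδ δ with hn
      have hlt := hstop' δ hδ0 (n - 1) (by omega) (by omega)
      have hle := hGbound δ hδ0 (n - 1)
      -- relate sqrt (a (n-1)) to sqrt (a n)
      have han : a n = q * a (n - 1) := by
        rw [ha, ha]
        conv_lhs => rw [show n = (n - 1) + 1 by omega]
        rw [pow_succ]
        ring
      have hsqrel : Real.sqrt (a n) = Real.sqrt q * Real.sqrt (a (n - 1)) := by
        rw [han, Real.sqrt_mul (le_of_lt hq0)]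
      have hδε : δ ≤ δ ^ ε := by
        calc δ = δ ^ (1:ℝ) := (Real.rpow_one δ).symm
        _ ≤ δ ^ ε := Real.rpow_le_rpow_of_exponent_ge hδ0 (le_of_lt hδ1) (le_of_lt hε1)
      have h3 : (C - 2) * δ ^ ε * Real.sqrt q ≤ c * M * Real.sqrt (a n) := by
        have : C * δ ^ ε < 2 * δ + c * Real.sqrt (a (n-1)) * M := lt_of_lt_of_le hlt hle
        have h4 : (C - 2) * δ ^ ε ≤ c * Real.sqrt (a (n-1)) * M := by nlinarith
        rw [hsqrel]
        calc (C - 2) * δ ^ ε * Real.sqrt q ≤ (c * Real.sqrt (a (n-1)) * M) * Real.sqrt q := by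
              nlinarith
        _ = c * M * (Real.sqrt q * Real.sqrt (a (n-1))) := by ring
      have hεsum : δ ^ ε * δ ^ (1 - ε) = δ := by
        rw [← Real.rpow_add hδ0]; norm_num
      have hA := hsqa n
      rw [div_le_iff₀ hA] at *
      have h5 : δ * (Real.sqrt q * (C - 2)) ≤ c * M * δ ^ (1 - ε) * Real.sqrt (a n) := by
        have e1 : ((C - 2) * δ ^ ε * Real.sqrt q) * δ ^ (1 - ε) = δ * (Real.sqrt q * (C - 2)) := by
          have e2 : ((C - 2) * δ ^ ε * Real.sqrt q) * δ ^ (1 - ε)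
              = (δ ^ ε * δ ^ (1 - ε)) * (Real.sqrt q * (C - 2)) := by ring
          rw [e2, hεsum]
        calc δ * (Real.sqrt q * (C - 2)) = ((C - 2) * δ ^ ε * Real.sqrt q) * δ ^ (1 - ε) := e1.symm
        _ ≤ (c * M * Real.sqrt (a n)) * δ ^ (1 - ε) := by
              have : (0:ℝ) ≤ δ ^ (1 - ε) := hrnn
              nlinarith
        _ = c * M * δ ^ (1 - ε) * Real.sqrt (a n) := by ring
      have hd : 0 < Real.sqrt q * (C - 2) := mul_pos hsq (by linarith)
      have h6 : δ ≤ K * δ ^ (1 - ε) * Real.sqrt (a n) := by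
        rw [hK]
        rw [div_mul_eq_mul_div, div_mul_eq_mul_div, le_div_iff₀ hd]
        linarith [h5]
      have h7 : 0 ≤ δ / Real.sqrt (α₀ * q) :=
        div_nonneg (le_of_lt hδ0) (Real.sqrt_nonneg _)
      nlinarith
  -- the dominating function tends to 0
  have hg : Tendsto (fun δ : ℝ => K * δ ^ (1 - ε) + δ / Real.sqrt (α₀ * q))
      (nhdsWithin 0 (Set.Ioi 0)) (nhds 0) := by
    have h1 : Tendsto (fun δ : ℝ => δ ^ (1 - ε)) (nhds 0) (nhds 0) := by
      have := (Real.continuousAt_rpow_const 0 (1 - ε) (Or.inr (by linarith))).tendsto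
      simpa [Real.zero_rpow (by linarith : (1:ℝ) - ε ≠ 0)] using this
    have h2 : Tendsto (fun δ : ℝ => K * δ ^ (1 - ε) + δ / Real.sqrt (α₀ * q))
        (nhds 0) (nhds (K * 0 + 0 / Real.sqrt (α₀ * q))) :=
      ((h1.const_mul K).add (tendsto_id.div_const _))
    simpa using h2.mono_left nhdsWithin_le_nhds
  refine squeeze_zero' ?_ ?_ hg
  · filter_upwards [self_mem_nhdsWithin] with δ hδ
    exact div_nonneg (le_of_lt hδ) (Real.sqrt_nonneg _)
  · filter_upwards [Ioo_mem_nhdsGT_of_mem (by norm_num : (0:ℝ) ∈ Set.Ico (0:ℝ) 1)] with δ hδ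
    exact hbound δ hδ
end

section
/- Let Q be a nonnegative selfadjoint bounded operator on a Hilbert space, f ≠ 0, ‖f − f_δ‖ ≤ δ, and suppose a_δ > 0 satisfies lim_{δ→0} a_δ ‖(Q + a_δ I)^{-1} f_δ‖ = 0. Then lim_{δ→0} a_δ = 0. -/
open Filter

theorem stmt_17
    {H : Type*} [NormedAddCommGroup H] [InnerProductSpace ℝ H] [CompleteSpace H]
    (Q : H →L[ℝ] H) (hQsa : IsSelfAdjoint Q)
    (hQpos : ∀ x : H, (0 : ℝ) ≤ inner ℝ (Q x) x)
    (f : H) (hf : f ≠ 0)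
    (fδ : ℝ → H) (hfδ : ∀ δ : ℝ, 0 < δ → ‖f - fδ δ‖ ≤ δ)
    (aδ : ℝ → ℝ) (haδ : ∀ δ : ℝ, 0 < δ → 0 < aδ δ)
    -- B δ is the inverse (Q + a_δ I)⁻¹
    (B : ℝ → (H →L[ℝ] H))
    (hB1 : ∀ δ : ℝ, 0 < δ → B δ * (Q + aδ δ • (1 : H →L[ℝ] H)) = 1)
    (hB2 : ∀ δ : ℝ, 0 < δ → (Q + aδ δ • (1 : H →L[ℝ] H)) * B δ = 1)
    (hvanish : Tendsto (fun δ : ℝ => aδ δ * ‖(B δ) (fδ δ)‖)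
      (nhdsWithin 0 (Set.Ioi 0)) (nhds 0)) :
    Tendsto aδ (nhdsWithin 0 (Set.Ioi 0)) (nhds 0) := by
  have hfpos : (0 : ℝ) < ‖f‖ := norm_pos_iff.mpr hf
  have hM : (0 : ℝ) ≤ ‖Q‖ := norm_nonneg Q
  rw [NormedAddCommGroup.tendsto_nhds_zero] at hvanish ⊢
  intro ε hε
  set M := ‖Q‖ with hMdef
  have hc : 0 < ε * (‖f‖ / 2) / (M + ε) := by positivity
  have h1 := hvanish _ hc
  have h2 : ∀ᶠ δ in nhdsWithin 0 (Set.Ioi 0), δ < ‖f‖ / 2 :=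
    (gt_mem_nhds (by linarith : (0:ℝ) < ‖f‖ / 2)).filter_mono nhdsWithin_le_nhds
  filter_upwards [h1, h2, self_mem_nhdsWithin] with δ hA hδlt hδpos
  have hδpos' : (0:ℝ) < δ := hδpos
  have ha : 0 < aδ δ := haδ δ hδpos'
  rw [Real.norm_eq_abs, abs_of_pos ha]
  by_contra hcon
  push_neg at hcon
  -- ε ≤ aδ δ
  have hεa : ε ≤ aδ δ := hcon
  -- lower bound on ‖fδ δ‖
  have hfd : ‖f‖ / 2 < ‖fδ δ‖ := by
    have h3 : ‖f‖ - ‖fδ δ‖ ≤ ‖f - fδ δ‖ := norm_sub_norm_le _ _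
    have h4 := hfδ δ hδpos'
    linarith
  -- ‖fδ δ‖ ≤ (M + aδ δ) * ‖B δ (fδ δ)‖
  have hkey : ‖fδ δ‖ ≤ (M + aδ δ) * ‖(B δ) (fδ δ)‖ := by
    have h5 : (Q + aδ δ • (1 : H →L[ℝ] H)) ((B δ) (fδ δ)) = fδ δ := by
      have := hB2 δ hδpos'
      calc (Q + aδ δ • (1 : H →L[ℝ] H)) ((B δ) (fδ δ))
          = ((Q + aδ δ • (1 : H →L[ℝ] H)) * B δ) (fδ δ) := rfl
        _ = (1 : H →L[ℝ] H) (fδ δ) := by rw [this]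
        _ = fδ δ := rfl
    have h6 : (Q + aδ δ • (1 : H →L[ℝ] H)) ((B δ) (fδ δ))
        = Q ((B δ) (fδ δ)) + aδ δ • ((B δ) (fδ δ)) := by
      simp [ContinuousLinearMap.add_apply, ContinuousLinearMap.smul_apply]
    calc ‖fδ δ‖ = ‖Q ((B δ) (fδ δ)) + aδ δ • ((B δ) (fδ δ))‖ := by rw [← h6, h5]
      _ ≤ ‖Q ((B δ) (fδ δ))‖ + ‖aδ δ • ((B δ) (fδ δ))‖ := norm_add_le _ _
      _ ≤ M * ‖(B δ) (fδ δ)‖ + aδ δ * ‖(B δ) (fδ δ)‖ := by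
          gcongr
          · exact Q.le_opNorm _
          · rw [norm_smul, Real.norm_eq_abs, abs_of_pos ha]
      _ = (M + aδ δ) * ‖(B δ) (fδ δ)‖ := by ring
  have hnn : 0 ≤ aδ δ * ‖(B δ) (fδ δ)‖ := mul_nonneg ha.le (norm_nonneg _)
  rw [Real.norm_eq_abs, abs_of_nonneg hnn, lt_div_iff₀ (by positivity : (0:ℝ) < M + ε)] at hA
  nlinarith [norm_nonneg ((B δ) (fδ δ)), mul_le_mul_of_nonneg_left hkey hε.le,
    mul_nonneg (mul_nonneg (sub_nonneg.mpr hεa) hM) (norm_nonneg ((B δ) (fδ δ)))]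
end

section
/- Suppose, in addition to the hypotheses guaranteeing convergence with exact data (conditions ‖T − T^{(m_i)}‖ ≤ a_i/2, ‖T^{(m_i)} − K*_{m_i}K‖ ≤ a_i², ‖K*_{m_i} − K*‖ ≤ √(a_i)/2), that n_δ satisfies n_δ → ∞ and δ/√(a_{n_δ}) → 0 as δ → 0. Then the noisy iterates u^δ_{n_δ,m_{n_δ}} defined by u^δ_{n,m_n} = q u^δ_{n−1,m_{n−1}} + (1−q) T_{a_n,m_n}^{-1} K*_{m_n} f_δ, u^δ_0 = 0, converge to the minimal-norm solution y: ‖u^δ_{n_δ,m_{n_δ}} − y‖ → 0 as δ → 0. -/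
open Filter

lemma geom_rec_aux (q : ℝ) (hq0 : 0 < q) (hq1 : q < 1) (e w : ℕ → ℝ)
    (he : ∀ n, 0 ≤ e n)
    (hrec : ∀ n : ℕ, e (n + 1) ≤ q * e n + (1 - q) * w (n + 1))
    (hw : Tendsto w atTop (nhds 0)) : Tendsto e atTop (nhds 0) := by
  rw [Metric.tendsto_atTop]
  intro ε hε
  obtain ⟨N, hN⟩ := (Metric.tendsto_atTop.mp hw) (ε / 2) (by positivity)
  have key : ∀ k : ℕ, e (N + k) ≤ q ^ k * e N + ε / 2 := by
    intro k
    induction k with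
    | zero => simp; nlinarith [he N]
    | succ k ih =>
      have h1 := hrec (N + k)
      have h2 : w (N + k + 1) < ε / 2 := by
        have := hN (N + k + 1) (by omega)
        rw [Real.dist_eq, sub_zero] at this
        exact lt_of_le_of_lt (le_abs_self _) this
      have : e (N + (k + 1)) ≤ q * e (N + k) + (1 - q) * (ε / 2) := by
        have : (1 - q) * w (N + k + 1) ≤ (1 - q) * (ε / 2) := by nlinarith
        calc e (N + (k + 1)) = e (N + k + 1) := by ring_nf
          _ ≤ q * e (N + k) + (1 - q) * w (N + k + 1) := h1
          _ ≤ q * e (N + k) + (1 - q) * (ε / 2) := by linarith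
      have h3 := mul_le_mul_of_nonneg_left ih hq0.le
      have h5 : q * (q ^ k * e N + ε / 2) = q ^ (k+1) * e N + q * (ε / 2) := by ring
      have h6 : q * (ε / 2) + (1 - q) * (ε / 2) = ε / 2 := by ring
      linarith
  have hq' : Tendsto (fun k : ℕ => q ^ k * e N) atTop (nhds 0) := by
    simpa using (tendsto_pow_atTop_nhds_zero_of_lt_one hq0.le hq1).mul_const (e N)
  obtain ⟨k₀, hk₀⟩ := (Metric.tendsto_atTop.mp hq') (ε / 2) (by positivity)
  refine ⟨N + k₀, fun n hn => ?_⟩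
  have hk : q ^ (n - N) * e N < ε / 2 := by
    have := hk₀ (n - N) (by omega)
    rw [Real.dist_eq, sub_zero] at this
    exact lt_of_le_of_lt (le_abs_self _) this
  have := key (n - N)
  rw [Real.dist_eq, sub_zero, abs_of_nonneg (he n)]
  have hnN : N + (n - N) = n := by omega
  rw [hnN] at this
  linarith



set_option maxHeartbeats 2000000 in
theorem stmt_19
    {H : Type*} [NormedAddCommGroup H] [InnerProductSpace ℝ H] [CompleteSpace H]
    (K : H →L[ℝ] H) (y f : H) (hf : K y = f)
    (hy : ∀ z : H, K z = 0 → inner ℝ y z = (0 : ℝ))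
    (α₀ q : ℝ) (hα₀ : 0 < α₀) (hq : q ∈ Set.Ioo (0 : ℝ) 1)
    (a : ℕ → ℝ) (ha : ∀ n, a n = α₀ * q ^ n)
    -- finite-dimensional approximations T^{(m_i)} of T = K*K and K*_{m_i} of K*
    (Tm Km : ℕ → (H →L[ℝ] H))
    (hT : ∀ i : ℕ, 1 ≤ i → ‖ContinuousLinearMap.adjoint K * K - Tm i‖ ≤ a i / 2)
    (hTK : ∀ i : ℕ, 1 ≤ i → ‖Tm i - Km i * K‖ ≤ (a i) ^ 2)
    (hK : ∀ i : ℕ, 1 ≤ i → ‖Km i - ContinuousLinearMap.adjoint K‖ ≤ Real.sqrt (a i) / 2)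
    -- B n is the inverse T_{a_n,m_n}⁻¹ = (T^{(m_n)} + a_n I)⁻¹
    (B : ℕ → (H →L[ℝ] H))
    (hB1 : ∀ n : ℕ, 1 ≤ n → B n * (Tm n + a n • (1 : H →L[ℝ] H)) = 1)
    (hB2 : ∀ n : ℕ, 1 ≤ n → (Tm n + a n • (1 : H →L[ℝ] H)) * B n = 1)
    -- noisy data and noisy iterates
    (fδ : ℝ → H) (hfδ : ∀ δ : ℝ, 0 < δ → ‖f - fδ δ‖ ≤ δ)
    (uδ : ℝ → ℕ → H) (huδ0 : ∀ δ : ℝ, 0 < δ → uδ δ 0 = 0)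
    (huδ : ∀ δ : ℝ, 0 < δ → ∀ n : ℕ, 1 ≤ n →
      uδ δ n = q • uδ δ (n - 1) + (1 - q) • (B n) ((Km n) (fδ δ)))
    -- the stopping index
    (nδ : ℝ → ℕ)
    (hnδ : Tendsto nδ (nhdsWithin 0 (Set.Ioi 0)) atTop)
    (hnδ2 : Tendsto (fun δ : ℝ => δ / Real.sqrt (a (nδ δ)))
      (nhdsWithin 0 (Set.Ioi 0)) (nhds 0)) :
    Tendsto (fun δ : ℝ => ‖uδ δ (nδ δ) - y‖) (nhdsWithin 0 (Set.Ioi 0)) (nhds 0) := by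
  obtain ⟨hq0, hq1⟩ := hq
  set A := ContinuousLinearMap.adjoint K with hA
  have hapos : ∀ n, 0 < a n := fun n => by rw [ha]; positivity
  have hsq : ∀ n, 0 < Real.sqrt (a n) := fun n => Real.sqrt_pos.mpr (hapos n)
  -- defining equations for B n
  have hBapp : ∀ n, 1 ≤ n → ∀ x : H, Tm n (B n x) + a n • B n x = x := by
    intro n hn x
    have := congrArg (fun L : H →L[ℝ] H => L x) (hB2 n hn)
    simpa using this
  have hB1app : ∀ n, 1 ≤ n → ∀ x : H, B n (Tm n x + a n • x) = x := by
    intro n hn x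
    have := congrArg (fun L : H →L[ℝ] H => L x) (hB1 n hn)
    simpa using this
  -- coercivity inequality
  have hkey : ∀ n, 1 ≤ n → ∀ x : H,
      ‖K (B n x)‖ ^ 2 + a n / 2 * ‖B n x‖ ^ 2 ≤ inner ℝ x (B n x) := by
    intro n hn x
    set z := B n x with hz
    have h0 : Tm n z + a n • z = x := hBapp n hn x
    have h1 : (inner ℝ x z : ℝ) = inner ℝ (Tm n z) z + a n * ‖z‖ ^ 2 := by
      rw [← h0, inner_add_left, real_inner_smul_left, real_inner_self_eq_norm_sq]
    have h2 : (inner ℝ ((A * K) z) z : ℝ) = ‖K z‖ ^ 2 := by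
      rw [ContinuousLinearMap.mul_apply, hA, ContinuousLinearMap.adjoint_inner_left,
        real_inner_self_eq_norm_sq]
    have h3 : (inner ℝ ((A * K - Tm n) z) z : ℝ) ≤ a n / 2 * ‖z‖ ^ 2 := by
      calc (inner ℝ ((A * K - Tm n) z) z : ℝ) ≤ ‖(A * K - Tm n) z‖ * ‖z‖ :=
            real_inner_le_norm _ _
        _ ≤ ‖A * K - Tm n‖ * ‖z‖ * ‖z‖ := by
            gcongr
            exact (A * K - Tm n).le_opNorm z
        _ ≤ a n / 2 * ‖z‖ ^ 2 := by
            have := hT n hn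
            nlinarith [norm_nonneg z]
    have h4 : (inner ℝ ((A * K - Tm n) z) z : ℝ) = ‖K z‖ ^ 2 - inner ℝ (Tm n z) z := by
      rw [ContinuousLinearMap.sub_apply, inner_sub_left, h2]
    linarith
  -- norm bounds
  have hBnorm : ∀ n, 1 ≤ n → ∀ x : H, a n * ‖B n x‖ ≤ 2 * ‖x‖ := by
    intro n hn x
    have h1 := hkey n hn x
    have h2 : (inner ℝ x (B n x) : ℝ) ≤ ‖x‖ * ‖B n x‖ := real_inner_le_norm _ _
    have h3 : a n / 2 * ‖B n x‖ ^ 2 ≤ ‖x‖ * ‖B n x‖ := by nlinarith [sq_nonneg ‖K (B n x)‖]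
    rcases (norm_nonneg (B n x)).eq_or_lt with h | h
    · rw [← h, mul_zero]; positivity
    · nlinarith
  have hBA : ∀ n, 1 ≤ n → ∀ g : H, ‖B n (A g)‖ * Real.sqrt (a n) ≤ ‖g‖ := by
    intro n hn g
    set z := B n (A g) with hz
    have h1 := hkey n hn (A g)
    have h2 : (inner ℝ (A g) z : ℝ) = inner ℝ g (K z) := by
      rw [hA, ContinuousLinearMap.adjoint_inner_left]
    have h3 : (inner ℝ g (K z) : ℝ) ≤ ‖g‖ * ‖K z‖ := real_inner_le_norm _ _
    have h4 : a n * ‖z‖ ^ 2 ≤ ‖g‖ ^ 2 := by nlinarith [sq_nonneg (‖g‖ - ‖K z‖)]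
    have h5 : (‖z‖ * Real.sqrt (a n)) ^ 2 ≤ ‖g‖ ^ 2 := by
      rw [mul_pow, Real.sq_sqrt (hapos n).le]; nlinarith
    have h6 := Real.sqrt_le_sqrt h5
    rwa [Real.sqrt_sq (by positivity), Real.sqrt_sq (norm_nonneg g)] at h6
  have hBKm : ∀ n, 1 ≤ n → ∀ g : H, ‖B n (Km n g)‖ * Real.sqrt (a n) ≤ 2 * ‖g‖ := by
    intro n hn g
    have hsplit : B n (Km n g) = B n ((Km n - A) g) + B n (A g) := by
      rw [← map_add]
      congr 1
      simp
    have hw : ‖(Km n - A) g‖ ≤ Real.sqrt (a n) / 2 * ‖g‖ := by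
      calc ‖(Km n - A) g‖ ≤ ‖Km n - A‖ * ‖g‖ := (Km n - A).le_opNorm g
        _ ≤ Real.sqrt (a n) / 2 * ‖g‖ :=
            mul_le_mul_of_nonneg_right (hK n hn) (norm_nonneg g)
    have h1 : a n * ‖B n ((Km n - A) g)‖ ≤ 2 * (Real.sqrt (a n) / 2 * ‖g‖) :=
      le_trans (hBnorm n hn _) (by linarith)
    have h2 : ‖B n ((Km n - A) g)‖ * Real.sqrt (a n) ≤ ‖g‖ := by
      have ha' : Real.sqrt (a n) * Real.sqrt (a n) = a n := Real.mul_self_sqrt (hapos n).le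
      have hX : (‖B n ((Km n - A) g)‖ * Real.sqrt (a n)) * Real.sqrt (a n)
          ≤ ‖g‖ * Real.sqrt (a n) := by
        calc (‖B n ((Km n - A) g)‖ * Real.sqrt (a n)) * Real.sqrt (a n)
            = ‖B n ((Km n - A) g)‖ * (Real.sqrt (a n) * Real.sqrt (a n)) := by ring
          _ = a n * ‖B n ((Km n - A) g)‖ := by rw [ha']; ring
          _ ≤ 2 * (Real.sqrt (a n) / 2 * ‖g‖) := h1
          _ = ‖g‖ * Real.sqrt (a n) := by ring
      exact le_of_mul_le_mul_right hX (hsq n)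
    have h3 := hBA n hn g
    calc ‖B n (Km n g)‖ * Real.sqrt (a n)
        ≤ (‖B n ((Km n - A) g)‖ + ‖B n (A g)‖) * Real.sqrt (a n) := by
          gcongr
          rw [hsplit]; exact norm_add_le _ _
      _ = ‖B n ((Km n - A) g)‖ * Real.sqrt (a n) + ‖B n (A g)‖ * Real.sqrt (a n) := by ring
      _ ≤ 2 * ‖g‖ := by linarith
  -- a n → 0
  have atend : Tendsto a atTop (nhds 0) := by
    have : Tendsto (fun n : ℕ => α₀ * q ^ n) atTop (nhds 0) := by
      simpa using (tendsto_pow_atTop_nhds_zero_of_lt_one hq0.le hq1).const_mul α₀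
    exact this.congr (fun n => (ha n).symm)
  have sqatend : Tendsto (fun n => Real.sqrt (a n)) atTop (nhds 0) := by
    simpa using atend.sqrt
  -- y is in the closure of the range of A
  have hyclos : y ∈ closure (LinearMap.range (A : H →ₗ[ℝ] H) : Set H) := by
    have h1 : y ∈ ((LinearMap.range (A : H →ₗ[ℝ] H) : Submodule ℝ H)ᗮ)ᗮ := by
      rw [Submodule.mem_orthogonal]
      intro u hu
      have hKu : K u = 0 := by
        have := hu (A (K u)) ⟨K u, rfl⟩
        rw [hA, ContinuousLinearMap.adjoint_inner_left] at this
        exact inner_self_eq_zero.mp this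
      rw [real_inner_comm]
      exact hy u hKu
    rw [Submodule.orthogonal_orthogonal_eq_closure] at h1
    exact h1
  -- Lavrentiev: a n * ‖B n y‖ → 0
  have hLav : Tendsto (fun n => a n * ‖B n y‖) atTop (nhds 0) := by
    rw [Metric.tendsto_atTop]
    intro ε hε
    obtain ⟨b, hb, hby⟩ := Metric.mem_closure_iff.mp hyclos (ε / 4) (by positivity)
    obtain ⟨g, hg⟩ := hb
    obtain ⟨N₁, hN₁⟩ := (Metric.tendsto_atTop.mp sqatend) (ε / (4 * (‖g‖ + 1)))
      (by positivity)
    refine ⟨max 1 N₁, fun n hn => ?_⟩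
    have hn1 : 1 ≤ n := le_trans (le_max_left _ _) hn
    have hnN : N₁ ≤ n := le_trans (le_max_right _ _) hn
    have hsplit : B n y = B n (y - b) + B n (A g) := by
      rw [← map_add]
      congr 1
      rw [show A g = b from hg]; abel
    have h1 : a n * ‖B n (y - b)‖ ≤ 2 * ‖y - b‖ := hBnorm n hn1 _
    have hyb : ‖y - b‖ < ε / 4 := by rwa [dist_eq_norm] at hby
    have h2 : a n * ‖B n (A g)‖ ≤ Real.sqrt (a n) * ‖g‖ := by
      have h3 := hBA n hn1 g
      have ha' : Real.sqrt (a n) * Real.sqrt (a n) = a n := Real.mul_self_sqrt (hapos n).le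
      calc a n * ‖B n (A g)‖
          = Real.sqrt (a n) * (‖B n (A g)‖ * Real.sqrt (a n)) := by
            rw [show Real.sqrt (a n) * (‖B n (A g)‖ * Real.sqrt (a n))
              = Real.sqrt (a n) * Real.sqrt (a n) * ‖B n (A g)‖ from by ring, ha']
        _ ≤ Real.sqrt (a n) * ‖g‖ := mul_le_mul_of_nonneg_left h3 (Real.sqrt_nonneg _)
    have h4 : Real.sqrt (a n) * ‖g‖ < ε / 4 := by
      have := hN₁ n hnN
      rw [Real.dist_eq, sub_zero, abs_of_nonneg (Real.sqrt_nonneg _)] at this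
      have hg1 : ‖g‖ < ‖g‖ + 1 := by linarith
      calc Real.sqrt (a n) * ‖g‖ ≤ Real.sqrt (a n) * (‖g‖ + 1) := by
            have := Real.sqrt_nonneg (a n); nlinarith
        _ < ε / (4 * (‖g‖ + 1)) * (‖g‖ + 1) := by
            have : (0:ℝ) < ‖g‖ + 1 := by positivity
            exact mul_lt_mul_of_pos_right ‹Real.sqrt (a n) < _› this
        _ = ε / 4 := by field_simp
    have h5 : a n * ‖B n y‖ ≤ a n * ‖B n (y - b)‖ + a n * ‖B n (A g)‖ := by
      have hna := norm_add_le (B n (y - b)) (B n (A g))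
      rw [← hsplit] at hna
      have := mul_le_mul_of_nonneg_left hna (hapos n).le
      rw [mul_add] at this
      exact this
    rw [Real.dist_eq, sub_zero, abs_of_nonneg (mul_nonneg (hapos n).le (norm_nonneg _))]
    linarith
  have hnorm2 : ∀ v w : H, ‖q • v + (1 - q) • w‖ ≤ q * ‖v‖ + (1 - q) * ‖w‖ := by
    intro v w
    calc ‖q • v + (1 - q) • w‖ ≤ ‖q • v‖ + ‖(1 - q) • w‖ := norm_add_le _ _
      _ = q * ‖v‖ + (1 - q) * ‖w‖ := by
          rw [norm_smul, norm_smul, Real.norm_eq_abs, Real.norm_eq_abs,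
            abs_of_pos hq0, abs_of_pos (by linarith : (0:ℝ) < 1 - q)]
  -- exact iterates
  let u : ℕ → H := fun n =>
    Nat.rec 0 (fun m um => q • um + (1 - q) • B (m + 1) (Km (m + 1) f)) n
  have hu0 : u 0 = 0 := rfl
  have huS : ∀ m : ℕ, u (m + 1) = q • u m + (1 - q) • B (m + 1) (Km (m + 1) f) :=
    fun m => rfl
  -- the inner "residual" tends to zero
  have hWbound : ∀ n, 1 ≤ n → ‖B n (Km n f) - y‖ ≤ 2 * a n * ‖y‖ + a n * ‖B n y‖ := by
    intro n hn
    have hid : B n (Km n f) - y = B n ((Km n * K - Tm n) y) - a n • B n y := by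
      have hyid : y = B n (Tm n y + a n • y) := (hB1app n hn y).symm
      calc B n (Km n f) - y = B n (Km n (K y)) - B n (Tm n y + a n • y) := by
            rw [hf, ← hyid]
        _ = B n (Km n (K y) - (Tm n y + a n • y)) := by rw [map_sub]
        _ = B n ((Km n * K - Tm n) y - a n • y) := by
            congr 1
            simp only [ContinuousLinearMap.mul_apply, ContinuousLinearMap.sub_apply]
            abel
        _ = B n ((Km n * K - Tm n) y) - a n • B n y := by rw [map_sub, map_smul]
    rw [hid]
    have h2 : ‖(Km n * K - Tm n) y‖ ≤ a n ^ 2 * ‖y‖ := by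
      calc ‖(Km n * K - Tm n) y‖ = ‖(Tm n - Km n * K) y‖ := by
            rw [← norm_neg]; congr 1; simp
        _ ≤ ‖Tm n - Km n * K‖ * ‖y‖ := (Tm n - Km n * K).le_opNorm y
        _ ≤ a n ^ 2 * ‖y‖ := mul_le_mul_of_nonneg_right (hTK n hn) (norm_nonneg y)
    have h1 : ‖B n ((Km n * K - Tm n) y)‖ ≤ 2 * a n * ‖y‖ := by
      have h3 := hBnorm n hn ((Km n * K - Tm n) y)
      have h5 := hapos n
      nlinarith [norm_nonneg (B n ((Km n * K - Tm n) y))]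
    have h4 : ‖a n • B n y‖ = a n * ‖B n y‖ := by
      rw [norm_smul, Real.norm_eq_abs, abs_of_pos (hapos n)]
    calc ‖B n ((Km n * K - Tm n) y) - a n • B n y‖
        ≤ ‖B n ((Km n * K - Tm n) y)‖ + ‖a n • B n y‖ := norm_sub_le _ _
      _ ≤ 2 * a n * ‖y‖ + a n * ‖B n y‖ := by rw [h4]; linarith
  have hW : Tendsto (fun n => ‖B n (Km n f) - y‖) atTop (nhds 0) := by
    apply squeeze_zero' (Eventually.of_forall fun n => norm_nonneg _)
    · filter_upwards [eventually_ge_atTop 1] with n hn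
      exact hWbound n hn
    · have t1 : Tendsto (fun n => 2 * a n * ‖y‖) atTop (nhds 0) := by
        have := (atend.const_mul 2).mul_const ‖y‖
        simpa [mul_assoc] using this
      simpa using t1.add hLav
  -- convergence with exact data
  have hE : Tendsto (fun n => ‖u n - y‖) atTop (nhds 0) := by
    refine geom_rec_aux q hq0 hq1 _ _ (fun n => norm_nonneg _) (fun n => ?_) hW
    have hy' : q • y + (1 - q) • y = y := by
      rw [← add_smul]; simp
    have hid : u (n + 1) - y = q • (u n - y) + (1 - q) • (B (n + 1) (Km (n + 1) f) - y) := by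
      rw [huS n, smul_sub, smul_sub]
      nth_rewrite 1 [← hy']
      abel
    rw [hid]
    exact hnorm2 _ _
  -- noise propagation
  set C := 2 * (1 - q) / (1 - q * Real.sqrt q) with hC
  have hsq1 : Real.sqrt q ≤ 1 := Real.sqrt_le_one.mpr hq1.le
  have hr1 : q * Real.sqrt q < 1 := by nlinarith [Real.sqrt_nonneg q]
  have hr0 : (0:ℝ) < 1 - q * Real.sqrt q := by linarith
  have hCpos : 0 < C := div_pos (by linarith) hr0
  have hnoise : ∀ δ : ℝ, 0 < δ → ∀ n : ℕ, ‖uδ δ n - u n‖ * Real.sqrt (a n) ≤ C * δ := by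
    intro δ hδ n
    induction n with
    | zero =>
      simp only [huδ0 δ hδ, hu0, sub_zero, norm_zero, zero_mul]
      exact mul_nonneg hCpos.le hδ.le
    | succ n ih =>
      have hrec : uδ δ (n + 1) - u (n + 1)
          = q • (uδ δ n - u n) + (1 - q) • B (n + 1) (Km (n + 1) (fδ δ - f)) := by
        rw [huδ δ hδ (n + 1) (by omega), huS n]
        simp only [Nat.add_sub_cancel]
        rw [map_sub (Km (n + 1)), map_sub (B (n + 1)), smul_sub, smul_sub]
        abel
      have h1 : ‖uδ δ (n + 1) - u (n + 1)‖
          ≤ q * ‖uδ δ n - u n‖ + (1 - q) * ‖B (n + 1) (Km (n + 1) (fδ δ - f))‖ := by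
        rw [hrec]; exact hnorm2 _ _
      have h2 : ‖B (n + 1) (Km (n + 1) (fδ δ - f))‖ * Real.sqrt (a (n + 1)) ≤ 2 * δ := by
        have h3 := hBKm (n + 1) (by omega) (fδ δ - f)
        have hd : ‖fδ δ - f‖ ≤ δ := by rw [norm_sub_rev]; exact hfδ δ hδ
        linarith
      have hsa : Real.sqrt (a (n + 1)) = Real.sqrt q * Real.sqrt (a n) := by
        rw [ha (n + 1), ha n, pow_succ,
          show α₀ * (q ^ n * q) = q * (α₀ * q ^ n) from by ring,
          Real.sqrt_mul hq0.le]
      calc ‖uδ δ (n + 1) - u (n + 1)‖ * Real.sqrt (a (n + 1))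
          ≤ (q * ‖uδ δ n - u n‖ + (1 - q) * ‖B (n + 1) (Km (n + 1) (fδ δ - f))‖)
            * Real.sqrt (a (n + 1)) := mul_le_mul_of_nonneg_right h1 (Real.sqrt_nonneg _)
        _ = q * Real.sqrt q * (‖uδ δ n - u n‖ * Real.sqrt (a n))
            + (1 - q) * (‖B (n + 1) (Km (n + 1) (fδ δ - f))‖ * Real.sqrt (a (n + 1))) := by
            rw [hsa]; ring
        _ ≤ q * Real.sqrt q * (C * δ) + (1 - q) * (2 * δ) := by
            have hqq : (0:ℝ) ≤ q * Real.sqrt q := by positivity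
            have h1q : (0:ℝ) ≤ 1 - q := by linarith
            exact add_le_add (mul_le_mul_of_nonneg_left ih hqq)
              (mul_le_mul_of_nonneg_left h2 h1q)
        _ = C * δ := by rw [hC]; field_simp; ring
  -- putting it together
  have h1 : Tendsto (fun δ : ℝ => ‖u (nδ δ) - y‖) (nhdsWithin 0 (Set.Ioi 0)) (nhds 0) :=
    hE.comp hnδ
  have h2 : Tendsto (fun δ : ℝ => C * (δ / Real.sqrt (a (nδ δ))))
      (nhdsWithin 0 (Set.Ioi 0)) (nhds 0) := by
    simpa using hnδ2.const_mul C
  have h3 : Tendsto (fun δ : ℝ => ‖u (nδ δ) - y‖ + C * (δ / Real.sqrt (a (nδ δ))))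
      (nhdsWithin 0 (Set.Ioi 0)) (nhds 0) := by
    simpa using h1.add h2
  refine squeeze_zero' (Eventually.of_forall fun δ => norm_nonneg _) ?_ h3
  filter_upwards [self_mem_nhdsWithin] with δ hδ
  have hδ' : (0:ℝ) < δ := hδ
  have hd2 : ‖uδ δ (nδ δ) - u (nδ δ)‖ ≤ C * (δ / Real.sqrt (a (nδ δ))) := by
    rw [← mul_div_assoc, le_div_iff₀ (hsq (nδ δ))]
    exact hnoise δ hδ' (nδ δ)
  calc ‖uδ δ (nδ δ) - y‖ = ‖(uδ δ (nδ δ) - u (nδ δ)) + (u (nδ δ) - y)‖ := by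
        rw [sub_add_sub_cancel]
    _ ≤ ‖uδ δ (nδ δ) - u (nδ δ)‖ + ‖u (nδ δ) - y‖ := norm_add_le _ _
    _ ≤ ‖u (nδ δ) - y‖ + C * (δ / Real.sqrt (a (nδ δ))) := by linarith
end
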